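/- arXiv:2406.08779 — 5 statements merged into one kernel-verified Lean document; each statement's English description precedes it below -/
import Mathlib

section
/- Let K be a closed subset of the closed unit ball D^n containing the boundary sphere S^{n-1}, and let 𝒰 be the set of connected components of D^n ∖ K. Then the following are equivalent: (1) every sequence of pairwise distinct elements of 𝒰 has a subsequence whose limit (set of limits of sequences of points chosen from the sets) is a single point; (2) for every δ > 0, only finitely many elements of 𝒰 have diameter greater than δ. -/
/-!
If infinitely many components have diameter `> δ`, pick in each two points at distance `> δ`;
by compactness of `Dⁿ`, a subsequence along which both points converge has two distinct points
in its limit set, and so has every further subsequence. Conversely, if the diameters of pairwise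
distinct components tend to `0`, any subsequence along which chosen points converge to `p` has
limit set `{p}`.
-/

open Filter Topology Metric Bornology

/-- The limit set of a sequence of subsets: all limits of convergent sequences of points
chosen from the sets. -/
def seqSetLimit {X : Type*} [MetricSpace X] (U : ℕ → Set X) : Set X :=
  {p | ∃ x : ℕ → X, (∀ m, x m ∈ U m) ∧ Filter.Tendsto x Filter.atTop (nhds p)}

section

variable {X : Type*} [MetricSpace X] {S : Set X} {U : ℕ → Set X}

lemma Metric.exists_lt_dist_of_lt_diam {s : Set X} {δ : ℝ} (hδ : 0 ≤ δ) (h : δ < diam s) :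
    ∃ x ∈ s, ∃ y ∈ s, δ < dist x y := by
  by_contra! hle
  exact (diam_le_of_forall_dist_le hδ hle).not_gt h

lemma seqSetLimit_subset_comp {φ : ℕ → ℕ} (hφ : StrictMono φ) :
    seqSetLimit U ⊆ seqSetLimit (fun k => U (φ k)) := by
  rintro p ⟨x, hx, hxp⟩
  exact ⟨x ∘ φ, fun k => hx (φ k), hxp.comp hφ.tendsto_atTop⟩

lemma tendsto_diam_zero_of_finite_lt_diam (hfin : ∀ δ > 0, {m | δ < diam (U m)}.Finite) :
    Tendsto (fun m => diam (U m)) atTop (𝓝 0) := by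
  refine tendsto_order.2 ⟨fun a ha => .of_forall fun m => ha.trans_le diam_nonneg,
    fun δ hδ => ?_⟩
  rw [← Nat.cofinite_eq_atTop]
  filter_upwards [(hfin (δ / 2) (half_pos hδ)).eventually_cofinite_notMem] with m hm
  linarith [not_lt.1 hm]

lemma tendsto_of_mem_of_tendsto_diam {c z : ℕ → X} {p : X} (hb : ∀ m, IsBounded (U m))
    (hdiam : Tendsto (fun m => diam (U m)) atTop (𝓝 0)) (hc : ∀ m, c m ∈ U m)
    (hcp : Tendsto c atTop (𝓝 p)) (hz : ∀ m, z m ∈ U m) : Tendsto z atTop (𝓝 p) := by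
  rw [tendsto_iff_dist_tendsto_zero] at hcp ⊢
  have hbound : ∀ m, dist (z m) p ≤ diam (U m) + dist (c m) p := fun m =>
    calc dist (z m) p ≤ dist (z m) (c m) + dist (c m) p := dist_triangle _ _ _
      _ ≤ diam (U m) + dist (c m) p := by gcongr; exact dist_le_diam_of_mem (hb m) (hz m) (hc m)
  simpa using squeeze_zero (fun m => dist_nonneg) hbound (by simpa using hdiam.add hcp)

lemma seqSetLimit_eq_singleton_of_tendsto_diam {c : ℕ → X} {p : X} (hb : ∀ m, IsBounded (U m))
    (hdiam : Tendsto (fun m => diam (U m)) atTop (𝓝 0)) (hc : ∀ m, c m ∈ U m)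
    (hcp : Tendsto c atTop (𝓝 p)) : seqSetLimit U = {p} := by
  ext q
  constructor
  · rintro ⟨z, hz, hzq⟩
    exact tendsto_nhds_unique hzq (tendsto_of_mem_of_tendsto_diam hb hdiam hc hcp hz)
  · rintro rfl
    exact ⟨c, hc, hcp⟩

lemma exists_subseq_seqSetLimit_eq_singleton (hS : IsCompact S) (hUS : ∀ m, U m ⊆ S)
    (hne : ∀ m, (U m).Nonempty) (hfin : ∀ δ > 0, {m | δ < diam (U m)}.Finite) :
    ∃ φ : ℕ → ℕ, StrictMono φ ∧ ∃ p, seqSetLimit (fun k => U (φ k)) = {p} := by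
  choose c hc using hne
  obtain ⟨p, -, φ, hφ, hcp⟩ := hS.tendsto_subseq fun m => hUS m (hc m)
  have hdiam := (tendsto_diam_zero_of_finite_lt_diam hfin).comp hφ.tendsto_atTop
  exact ⟨φ, hφ, p, seqSetLimit_eq_singleton_of_tendsto_diam
    (fun k => hS.isBounded.subset (hUS (φ k))) hdiam (fun k => hc (φ k)) hcp⟩

lemma exists_subseq_ne_mem_seqSetLimit (hS : IsCompact S) (hUS : ∀ m, U m ⊆ S) {δ : ℝ}
    (hδ : 0 < δ) (hdiam : ∀ m, δ < diam (U m)) :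
    ∃ ψ : ℕ → ℕ, StrictMono ψ ∧ ∃ q r, q ≠ r ∧
      q ∈ seqSetLimit (fun k => U (ψ k)) ∧ r ∈ seqSetLimit (fun k => U (ψ k)) := by
  choose x hx y hy hxy using fun m => exists_lt_dist_of_lt_diam hδ.le (hdiam m)
  obtain ⟨⟨q, r⟩, -, ψ, hψ, hlim⟩ :=
    (hS.prod hS).tendsto_subseq fun m => Set.mk_mem_prod (hUS m (hx m)) (hUS m (hy m))
  have hdist : δ ≤ dist q r :=
    le_of_tendsto_of_tendsto' tendsto_const_nhds ((hlim.fst_nhds).dist hlim.snd_nhds)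
      fun k => (hxy (ψ k)).le
  exact ⟨ψ, hψ, q, r, fun hqr => by simp [hqr] at hdist; linarith,
    ⟨_, fun k => hx (ψ k), hlim.fst_nhds⟩, ⟨_, fun k => hy (ψ k), hlim.snd_nhds⟩⟩

theorem forall_exists_subseq_seqSetLimit_eq_singleton_iff {𝒰 : Set (Set X)} (hS : IsCompact S)
    (h𝒰S : ∀ C ∈ 𝒰, C ⊆ S) (h𝒰ne : ∀ C ∈ 𝒰, C.Nonempty) :
    (∀ U : ℕ → Set X, (∀ m, U m ∈ 𝒰) → Function.Injective U →
      ∃ φ : ℕ → ℕ, StrictMono φ ∧ ∃ p, seqSetLimit (fun k => U (φ k)) = {p}) ↔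
    (∀ δ : ℝ, 0 < δ → {C ∈ 𝒰 | δ < diam C}.Finite) := by
  constructor
  · intro h δ hδ
    by_contra hinf
    let f := Set.Infinite.natEmbedding _ hinf
    obtain ⟨ψ, hψ, q, r, hqr, hq, hr⟩ := exists_subseq_ne_mem_seqSetLimit hS
      (fun m => h𝒰S _ (f m).2.1) hδ fun m => (f m).2.2
    obtain ⟨φ, hφ, p, hp⟩ := h (fun k => f (ψ k)) (fun k => (f (ψ k)).2.1)
      (Subtype.val_injective.comp (f.injective.comp hψ.injective))
    have hq' := seqSetLimit_subset_comp hφ hq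
    have hr' := seqSetLimit_subset_comp hφ hr
    rw [hp, Set.mem_singleton_iff] at hq' hr'
    exact hqr (hq'.trans hr'.symm)
  · intro h U hU hUinj
    refine exists_subseq_seqSetLimit_eq_singleton hS (fun m => h𝒰S _ (hU m))
      (fun m => h𝒰ne _ (hU m)) fun δ hδ => ?_
    exact ((h δ hδ).preimage hUinj.injOn).subset fun m hm => ⟨hU m, hm⟩

end

theorem stmt1_general (n : ℕ) (K : Set (EuclideanSpace ℝ (Fin n)))
    (𝒰 : Set (Set (EuclideanSpace ℝ (Fin n))))
    (h𝒰 : 𝒰 = {C | ∃ x ∈ Metric.closedBall (0 : EuclideanSpace ℝ (Fin n)) 1 \ K,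
      C = connectedComponentIn (Metric.closedBall (0 : EuclideanSpace ℝ (Fin n)) 1 \ K) x}) :
    (∀ U : ℕ → Set (EuclideanSpace ℝ (Fin n)), (∀ m, U m ∈ 𝒰) → Function.Injective U →
      ∃ φ : ℕ → ℕ, StrictMono φ ∧ ∃ p, seqSetLimit (fun k => U (φ k)) = {p}) ↔
    (∀ δ : ℝ, 0 < δ → {C ∈ 𝒰 | δ < Metric.diam C}.Finite) := by
  subst h𝒰
  refine forall_exists_subseq_seqSetLimit_eq_singleton_iff (isCompact_closedBall 0 1) ?_ ?_
  · rintro _ ⟨x, -, rfl⟩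
    exact (connectedComponentIn_subset _ _).trans Set.sdiff_subset
  · rintro _ ⟨x, hx, rfl⟩
    exact ⟨x, mem_connectedComponentIn hx⟩

/-- Let `K` be a closed subset of the closed unit ball `Dⁿ` containing the unit sphere,
and let `𝒰` be the set of connected components of `Dⁿ ∖ K`.  Then: every sequence of
pairwise distinct elements of `𝒰` has a subsequence whose limit set is a single point,
iff for every `δ > 0` only finitely many elements of `𝒰` have diameter greater
than `δ`. -/
theorem stmt1 (n : ℕ) (K : Set (EuclideanSpace ℝ (Fin n)))
    (hKcl : IsClosed K) (hKD : K ⊆ Metric.closedBall 0 1)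
    (hS : Metric.sphere (0 : EuclideanSpace ℝ (Fin n)) 1 ⊆ K)
    (𝒰 : Set (Set (EuclideanSpace ℝ (Fin n))))
    (h𝒰 : 𝒰 = {C | ∃ x ∈ Metric.closedBall (0 : EuclideanSpace ℝ (Fin n)) 1 \ K,
      C = connectedComponentIn (Metric.closedBall (0 : EuclideanSpace ℝ (Fin n)) 1 \ K) x}) :
    (∀ U : ℕ → Set (EuclideanSpace ℝ (Fin n)), (∀ m, U m ∈ 𝒰) → Function.Injective U →
      ∃ φ : ℕ → ℕ, StrictMono φ ∧ ∃ p, seqSetLimit (fun k => U (φ k)) = {p}) ↔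
    (∀ δ : ℝ, 0 < δ → {C ∈ 𝒰 | δ < Metric.diam C}.Finite) :=
  stmt1_general n K 𝒰 h𝒰
end

section
/- Let G be a torsion-free group acting on a compact metric space K as a convergence group, where K contains an invariant subset S on which the action is by homeomorphisms and the fixed points of the convergence dynamics lie in S. Then for every g ∈ G ∖ {1}, the homeomorphism of K induced by g has no fixed points in K ∖ S. In particular, for a convergence G-complex (μ, K, 𝒰) with G torsion-free, the action μ is free on K ∩ int(D^n). -/
/-!
If `g` has infinite order, its powers `gⁿ` are pairwise distinct, so the convergence property
yields a subsequence `g ^ nₖ` converging to a point `a ∈ S` locally uniformly away from a point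
`b ∈ S`. A fixed point `x ∉ S` of `g` differs from `b`, so the constant sequence `g ^ nₖ • x = x`
converges to `a`, whence `x = a ∈ S`.
-/

open Filter Pointwise Topology MulAction

def IsConvergenceAction (G : Type*) {K : Type*} [Group G] [UniformSpace K] [MulAction G K]
    (S : Set K) : Prop :=
  ∀ g : ℕ → G, Function.Injective g →
    ∃ φ : ℕ → ℕ, StrictMono φ ∧ ∃ a ∈ S, ∃ b ∈ S,
      ∀ C : Set K, IsCompact C → b ∉ C →
        TendstoUniformlyOn (fun k x => g (φ k) • x) (fun _ => a) atTop C

theorem IsConvergenceAction.mem_of_mem_fixedBy {G K : Type*} [Group G] [UniformSpace K]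
    [T2Space K] [MulAction G K] {S : Set K} (hconv : IsConvergenceAction G S) {g : G}
    (hg : ¬IsOfFinOrder g) {x : K} (hx : x ∈ fixedBy K g) : x ∈ S := by
  by_contra hxS
  obtain ⟨φ, -, a, haS, b, hbS, hU⟩ :=
    hconv (g ^ ·) (injective_pow_iff_not_isOfFinOrder.mpr hg)
  have hbx : b ∉ ({x} : Set K) := fun hb => hxS (Set.mem_singleton_iff.mp hb ▸ hbS)
  have hpow : ∀ n : ℕ, g ^ n • x = x := fun n => by
    simpa using mem_fixedBy_zpow hx n
  have hlim : Tendsto (fun _ : ℕ => x) atTop (𝓝 a) := by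
    simpa only [hpow] using (hU {x} isCompact_singleton hbx).tendsto_at rfl
  exact hxS (tendsto_const_nhds_iff.mp hlim ▸ haS)

theorem stmt4_general {G K : Type*} [Group G] [MetricSpace K]
    [MulAction G K]
    (htf : ∀ g : G, g ≠ 1 → ¬IsOfFinOrder g)
    (S : Set K)
    (hconv : ∀ g : ℕ → G, Function.Injective g →
      ∃ φ : ℕ → ℕ, StrictMono φ ∧ ∃ a ∈ S, ∃ b ∈ S,
        ∀ C : Set K, IsCompact C → b ∉ C →
          TendstoUniformlyOn (fun k x => g (φ k) • x) (fun _ => a) atTop C) :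
    ∀ g : G, g ≠ 1 → ∀ x : K, x ∉ S → g • x ≠ x :=
  fun g hg _ hxS hfix =>
    hxS (IsConvergenceAction.mem_of_mem_fixedBy hconv (htf g hg) hfix)

/-- Let a torsion-free group `G` act by homeomorphisms on a compact metric space `K`,
with an invariant subset `S`, such that the action has the convergence property with
attracting/repelling points always lying in `S`.  Then for every `g ≠ 1`, the
homeomorphism of `K` induced by `g` has no fixed point in `K ∖ S`.
(Applied to a convergence `G`-complex, `K` is the support of the complex, `S = K ∩ S^{n-1}`
and `K ∖ S = K ∩ int Dⁿ`, so the action is free on `K ∩ int Dⁿ`.) -/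
theorem stmt4 {G K : Type*} [Group G] [MetricSpace K] [CompactSpace K]
    [MulAction G K] [ContinuousConstSMul G K]
    (htf : ∀ g : G, g ≠ 1 → ¬IsOfFinOrder g)
    (S : Set K) (hSinv : ∀ g : G, g • S = S)
    (hconv : ∀ g : ℕ → G, Function.Injective g →
      ∃ φ : ℕ → ℕ, StrictMono φ ∧ ∃ a ∈ S, ∃ b ∈ S,
        ∀ C : Set K, IsCompact C → b ∉ C →
          TendstoUniformlyOn (fun k x => g (φ k) • x) (fun _ => a) atTop C) :
    ∀ g : G, g ≠ 1 → ∀ x : K, x ∉ S → g • x ≠ x :=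
  stmt4_general htf S hconv
end

section
/- Let (μ, K, 𝒰) be a G-complex that is a refinement of a G-complex (μ', K', 𝒰'), and suppose U ⊆ U' where U ∈ 𝒰 and U' ∈ 𝒰'. Then Stab_μ(U) ≤ Stab_{μ'}(U'). -/
/-- A generalized cell decomposition of the closed unit ball `Dⁿ`: a closed subset `K`
containing the boundary sphere, whose complementary components (the "cells") are open
cells with spherical boundaries, such that every sequence of distinct cells has a
subsequence converging to a single point. -/
structure GenCellDecomp (n : ℕ) where
  K : Set (EuclideanSpace ℝ (Fin n))
  isClosed : IsClosed K
  subset_ball : K ⊆ Metric.closedBall 0 1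
  sphere_subset : Metric.sphere (0 : EuclideanSpace ℝ (Fin n)) 1 ⊆ K
  cells : Set (Set (EuclideanSpace ℝ (Fin n)))
  cells_eq : cells = {C | ∃ x ∈ Metric.closedBall (0 : EuclideanSpace ℝ (Fin n)) 1 \ K,
    C = connectedComponentIn (Metric.closedBall (0 : EuclideanSpace ℝ (Fin n)) 1 \ K) x}
  cell_int : ∀ U ∈ cells, Nonempty (↥U ≃ₜ ↥(Metric.ball (0 : EuclideanSpace ℝ (Fin n)) 1))
  cell_bdry : ∀ U ∈ cells,
    Nonempty (↥(closure U \ U) ≃ₜ ↥(Metric.sphere (0 : EuclideanSpace ℝ (Fin n)) 1))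
  subconv : ∀ U : ℕ → Set (EuclideanSpace ℝ (Fin n)), (∀ m, U m ∈ cells) →
    Function.Injective U → ∃ φ : ℕ → ℕ, StrictMono φ ∧ ∃ p,
      {q | ∃ x : ℕ → EuclideanSpace ℝ (Fin n), (∀ k, x k ∈ U (φ k)) ∧
        Filter.Tendsto x Filter.atTop (nhds q)} = {p}

/-- The image of a subset `S ⊆ α` under a self-map of the subtype `↥A`. -/
def subIm {α : Type*} {A : Set α} (e : ↥A → ↥A) (S : Set α) : Set α :=
  Subtype.val '' (e '' (Subtype.val ⁻¹' S))

/-- A `G`-complex: a generalized cell decomposition together with a faithful action of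
`G` by homeomorphisms of `K` preserving the boundary sphere and permuting the boundaries
of the cells. -/
structure GComplex (n : ℕ) (G : Type*) [Group G] extends GenCellDecomp n where
  act : G → ↥K → ↥K
  act_one : ∀ x, act 1 x = x
  act_mul : ∀ g h x, act (g * h) x = act g (act h x)
  act_cont : ∀ g, Continuous (act g)
  act_faithful : ∀ g, (∀ x, act g x = x) → g = 1
  sphere_inv : ∀ g, subIm (act g) (Metric.sphere (0 : EuclideanSpace ℝ (Fin n)) 1) =
    Metric.sphere (0 : EuclideanSpace ℝ (Fin n)) 1
  cells_perm : ∀ g, ∀ U ∈ cells, ∃ U' ∈ cells,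
    subIm (act g) (closure U \ U) = closure U' \ U'

/-- A `G`-complex is free if no nontrivial element fixes a point of `K ∩ int Dⁿ`. -/
def GComplex.IsFree {n : ℕ} {G : Type*} [Group G] (c : GComplex n G) : Prop :=
  ∀ g : G, g ≠ 1 → ∀ x : ↥c.K,
    (x : EuclideanSpace ℝ (Fin n)) ∈ Metric.ball (0 : EuclideanSpace ℝ (Fin n)) 1 →
      c.act g x ≠ x

/-- A `G`-complex is a convergence complex if the action on `K` is a convergence action. -/
def GComplex.IsConvergence {n : ℕ} {G : Type*} [Group G] (c : GComplex n G) : Prop :=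
  ∀ g : ℕ → G, Function.Injective g → ∃ φ : ℕ → ℕ, StrictMono φ ∧ ∃ a b : ↥c.K,
    ∀ C : Set ↥c.K, IsCompact C → b ∉ C →
      TendstoUniformlyOn (fun k x => c.act (g (φ k)) x) (fun _ => a) Filter.atTop C

/-- The stabilizer of a cell `U`: elements whose action preserves `∂U = cl U ∖ U`. -/
def GComplex.stab {n : ℕ} {G : Type*} [Group G] (c : GComplex n G)
    (U : Set (EuclideanSpace ℝ (Fin n))) : Set G :=
  {g : G | subIm (c.act g) (closure U \ U) = closure U \ U}

/-!
An element `g` stabilizing `∂U` need not extend to a homeomorphism of `Dⁿ`, but it extends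
cellularly: let `F` be `g` on `K` and send each cell `W` of `𝒰` into a cell `W'` with
`g (∂W) = ∂W'`, taking `W' = U` for `W = U`. The cell of `𝒰'` containing `F x` is then a
locally constant function of `x ∈ Dⁿ ∖ K'`: inside a cell this is clear, and near a point of
`K` the null property makes the cells small, so that they are controlled by their boundary
points, where `F = g` is continuous. Hence it is constant on the connected cell `U'`, where it
equals `U'` because `F U ⊆ U ⊆ U'`. Passing to limits, `g` maps `∂U'` into `cl U'`, hence into
`∂U'` since `g` preserves `K'`; the same for `g⁻¹` gives equality.
-/

open Filter Metric Set Topology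

namespace GenCellDecomp

variable {n : ℕ}

def cellRegion (d : GenCellDecomp n) : Set (EuclideanSpace ℝ (Fin n)) :=
  closedBall 0 1 \ d.K

def cellOf (d : GenCellDecomp n) (x : EuclideanSpace ℝ (Fin n)) :
    Set (EuclideanSpace ℝ (Fin n)) :=
  connectedComponentIn d.cellRegion x

variable {d d' : GenCellDecomp n} {F : EuclideanSpace ℝ (Fin n) → EuclideanSpace ℝ (Fin n)}
  {U' W W' : Set (EuclideanSpace ℝ (Fin n))} {x y z b : EuclideanSpace ℝ (Fin n)}

theorem cellRegion_eq_ball_diff (d : GenCellDecomp n) : d.cellRegion = ball 0 1 \ d.K := by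
  ext x
  refine ⟨fun ⟨hx, hxK⟩ => ⟨?_, hxK⟩, fun ⟨hx, hxK⟩ => ⟨ball_subset_closedBall hx, hxK⟩⟩
  exact (mem_closedBall.1 hx).lt_of_ne fun h => hxK (d.sphere_subset (mem_sphere.2 h))

theorem isOpen_cellRegion (d : GenCellDecomp n) : IsOpen d.cellRegion :=
  d.cellRegion_eq_ball_diff ▸ isOpen_ball.sdiff d.isClosed

theorem cellRegion_subset_cellRegion (hK : d'.K ⊆ d.K) : d.cellRegion ⊆ d'.cellRegion :=
  sdiff_subset_sdiff_right hK

theorem mem_cellOf (hx : x ∈ d.cellRegion) : x ∈ d.cellOf x :=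
  mem_connectedComponentIn hx

theorem isOpen_cellOf (d : GenCellDecomp n) (x : EuclideanSpace ℝ (Fin n)) :
    IsOpen (d.cellOf x) :=
  d.isOpen_cellRegion.connectedComponentIn

theorem cellOf_mem_cells (hx : x ∈ d.cellRegion) : d.cellOf x ∈ d.cells :=
  d.cells_eq ▸ ⟨x, hx, rfl⟩

theorem eq_cellOf (hW : W ∈ d.cells) (hx : x ∈ W) : W = d.cellOf x := by
  rw [d.cells_eq] at hW
  obtain ⟨y, -, rfl⟩ := hW
  exact connectedComponentIn_eq hx

theorem cellOf_eq_of_mem (hy : y ∈ d.cellOf x) : d.cellOf x = d.cellOf y :=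
  connectedComponentIn_eq hy

theorem subset_cellRegion (hW : W ∈ d.cells) : W ⊆ d.cellRegion := by
  rw [d.cells_eq] at hW
  obtain ⟨y, -, rfl⟩ := hW
  exact connectedComponentIn_subset _ _

theorem nonempty_of_mem_cells (hW : W ∈ d.cells) : W.Nonempty := by
  rw [d.cells_eq] at hW
  obtain ⟨y, hy, rfl⟩ := hW
  exact ⟨y, mem_cellOf hy⟩

theorem isOpen_of_mem_cells (hW : W ∈ d.cells) : IsOpen W := by
  rw [d.cells_eq] at hW
  obtain ⟨y, -, rfl⟩ := hW
  exact d.isOpen_cellOf y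

theorem isPreconnected_of_mem_cells (hW : W ∈ d.cells) : IsPreconnected W := by
  rw [d.cells_eq] at hW
  obtain ⟨y, -, rfl⟩ := hW
  exact isPreconnected_connectedComponentIn

theorem closure_subset_closedBall (hW : W ∈ d.cells) : closure W ⊆ closedBall 0 1 :=
  closure_minimal ((subset_cellRegion hW).trans sdiff_subset) isClosed_closedBall

theorem closure_diff_subset (hW : W ∈ d.cells) : closure W \ W ⊆ d.K := by
  rintro x ⟨hxW, hx⟩
  by_contra hxK
  have hxd : x ∈ d.cellRegion := ⟨closure_subset_closedBall hW hxW, hxK⟩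
  obtain ⟨y, hyx, hyW⟩ := mem_closure_iff.1 hxW _ (d.isOpen_cellOf x) (mem_cellOf hxd)
  exact hx (eq_cellOf hW hyW ▸ (cellOf_eq_of_mem hyx).symm ▸ mem_cellOf hxd)

theorem mem_of_mem_closure (hW : W ∈ d.cells) (hx : x ∈ closure W) (hxK : x ∉ d.K) : x ∈ W :=
  by_contra fun hxW => hxK (closure_diff_subset hW ⟨hx, hxW⟩)

theorem subset_cellOf (hK : d'.K ⊆ d.K) (hW : W ∈ d.cells) (hy : y ∈ W) :
    W ⊆ d'.cellOf y :=
  (isPreconnected_of_mem_cells hW).subset_connectedComponentIn hy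
    ((subset_cellRegion hW).trans (cellRegion_subset_cellRegion hK))

theorem exists_mem_K_mem_closure_of_ne (hW : W ∈ d.cells) (hW' : W' ∈ d.cells) (hne : W ≠ W') :
    ∃ b ∈ d.K, b ∈ closure W := by
  have hW_ne_univ : W ≠ univ := fun h => by
    obtain ⟨y, hy⟩ := nonempty_of_mem_cells hW'
    exact hne ((eq_cellOf hW (h ▸ mem_univ y)).trans (eq_cellOf hW' hy).symm)
  obtain ⟨b, hb⟩ := nonempty_frontier_iff.2 ⟨nonempty_of_mem_cells hW, hW_ne_univ⟩
  rw [(isOpen_of_mem_cells hW).frontier_eq] at hb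
  exact ⟨b, closure_diff_subset hW hb, hb.1⟩

theorem eq_of_tendsto_of_mem_closure {W : ℕ → Set (EuclideanSpace ℝ (Fin n))}
    (hW : ∀ k, W k ∈ d.cells) (hinj : Function.Injective W)
    {a b : ℕ → EuclideanSpace ℝ (Fin n)} {p q : EuclideanSpace ℝ (Fin n)}
    (ha : ∀ k, a k ∈ closure (W k)) (hb : ∀ k, b k ∈ closure (W k))
    (hap : Tendsto a atTop (𝓝 p)) (hbq : Tendsto b atTop (𝓝 q)) : p = q := by
  obtain ⟨φ, hφ, p₀, hp₀⟩ := d.subconv W hW hinj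
  suffices h : ∀ a : ℕ → EuclideanSpace ℝ (Fin n), ∀ p, (∀ k, a k ∈ closure (W k)) →
      Tendsto a atTop (𝓝 p) → p = p₀ from (h a p ha hap).trans (h b q hb hbq).symm
  intro a p ha hap
  have : ∀ k : ℕ, ∃ y ∈ W (φ k), dist (a (φ k)) y < 1 / (k + 1) := fun k =>
    Metric.mem_closure_iff.1 (ha (φ k)) _ Nat.one_div_pos_of_nat
  choose y hyW hy using this
  have hyp : Tendsto y atTop (𝓝 p) :=
    (hap.comp hφ.tendsto_atTop).congr_dist <| squeeze_zero (fun _ => dist_nonneg)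
      (fun k => (hy k).le) tendsto_one_div_add_atTop_nhds_zero_nat
  have hp : p ∈ ({p₀} : Set (EuclideanSpace ℝ (Fin n))) := hp₀ ▸ ⟨y, hyW, hyp⟩
  exact hp

theorem exists_seq_tendsto_mem_closure_cellOf {z : ℕ → EuclideanSpace ℝ (Fin n)}
    (hx : x ∈ d.K) (hz : ∀ k, z k ∈ d.cellRegion) (hzx : Tendsto z atTop (𝓝 x)) :
    ∃ ι : ℕ → ℕ, ∃ b : ℕ → EuclideanSpace ℝ (Fin n), Tendsto b atTop (𝓝 x) ∧
      ∀ k, b k ∈ d.K ∧ b k ∈ closure (d.cellOf (z (ι k))) := by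
  set W := fun k => d.cellOf (z k)
  have hW : ∀ k, W k ∈ d.cells := fun k => cellOf_mem_cells (hz k)
  by_cases hfin : (range W).Finite
  · obtain ⟨V, hV⟩ : ∃ V, ∃ᶠ k in atTop, W k = V := by
      by_contra! h
      obtain ⟨k, hk⟩ := ((eventually_all_finite hfin).2 fun V _ => h V).exists
      exact hk (W k) (mem_range_self k) rfl
    obtain ⟨φ, hφ, hφV⟩ := extraction_of_frequently_atTop hV
    have hxV : x ∈ closure V := mem_closure_of_tendsto (hzx.comp hφ.tendsto_atTop)
      (.of_forall fun k => hφV k ▸ mem_cellOf (hz (φ k)))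
    exact ⟨φ, fun _ => x, tendsto_const_nhds,
      fun k => ⟨hx, show x ∈ closure (W (φ k)) from (hφV k).symm ▸ hxV⟩⟩
  · set e := Set.Infinite.natEmbedding _ hfin
    choose ι hι using fun k => (e k).2
    have hinj : Function.Injective (W ∘ ι) := fun i j h =>
      e.injective (Subtype.ext ((hι i).symm.trans (h.trans (hι j))))
    have hι_tendsto : Tendsto ι atTop atTop := hinj.of_comp.nat_tendsto_atTop
    choose b hbK hbW using fun k =>
      exists_mem_K_mem_closure_of_ne (hW (ι k)) (hW (ι (k + 1))) (hinj.ne k.succ_ne_self.symm)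
    -- the cells `W (ι k)` are pairwise distinct, so by the null property `b k` tends to `x` too
    obtain ⟨p, -, ψ, hψ, hbp⟩ := (isCompact_closedBall (0 : EuclideanSpace ℝ (Fin n)) 1)
      |>.tendsto_subseq fun k => closure_subset_closedBall (hW (ι k)) (hbW k)
    have hxp : x = p := eq_of_tendsto_of_mem_closure (fun k => hW (ι (ψ k)))
      (hinj.comp hψ.injective) (fun k => subset_closure (mem_cellOf (hz (ι (ψ k)))))
      (fun k => hbW (ψ k)) (hzx.comp (hι_tendsto.comp hψ.tendsto_atTop)) hbp
    exact ⟨ι ∘ ψ, b ∘ ψ, hxp ▸ hbp, fun k => ⟨hbK (ψ k), hbW (ψ k)⟩⟩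

def Adheres (d : GenCellDecomp n) (z b : EuclideanSpace ℝ (Fin n)) : Prop :=
  b ∈ d.K ∧ (z ∈ d.K → b = z) ∧ (z ∉ d.K → b ∈ closure (d.cellOf z))

theorem exists_seq_adheres {z : ℕ → EuclideanSpace ℝ (Fin n)} (hx : x ∈ d.K)
    (hz : ∀ k, z k ∈ closedBall 0 1) (hzx : Tendsto z atTop (𝓝 x)) :
    ∃ ι : ℕ → ℕ, ∃ b : ℕ → EuclideanSpace ℝ (Fin n), Tendsto b atTop (𝓝 x) ∧
      ∀ k, d.Adheres (z (ι k)) (b k) := by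
  by_cases hK : ∃ᶠ k in atTop, z k ∈ d.K
  · obtain ⟨φ, hφ, hφK⟩ := extraction_of_frequently_atTop hK
    exact ⟨φ, z ∘ φ, hzx.comp hφ.tendsto_atTop,
      fun k => ⟨hφK k, fun _ => rfl, fun h => absurd (hφK k) h⟩⟩
  · obtain ⟨φ, hφ, hφd⟩ := extraction_of_frequently_atTop
      ((not_frequently.1 hK).frequently.mono fun k hk => (⟨hz k, hk⟩ : z k ∈ d.cellRegion))
    obtain ⟨ι, b, hbx, hb⟩ :=
      exists_seq_tendsto_mem_closure_cellOf hx hφd (hzx.comp hφ.tendsto_atTop)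
    exact ⟨φ ∘ ι, b, hbx,
      fun k => ⟨(hb k).1, fun h => absurd h (hφd _).2, fun _ => (hb k).2⟩⟩

/-- A combinatorial substitute for a homeomorphism of `Dⁿ` permuting the cells. -/
structure IsCellular (d : GenCellDecomp n)
    (F : EuclideanSpace ℝ (Fin n) → EuclideanSpace ℝ (Fin n)) : Prop where
  continuousOn : ContinuousOn F d.K
  exists_cell : ∀ W ∈ d.cells, ∃ W' ∈ d.cells,
    MapsTo F W W' ∧ MapsTo F (closure W) (closure W')

namespace IsCellular

theorem tendsto_comp (hF : d.IsCellular F) {b : ℕ → EuclideanSpace ℝ (Fin n)}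
    (hb : ∀ k, b k ∈ d.K) (hx : x ∈ d.K) (hbx : Tendsto b atTop (𝓝 x)) :
    Tendsto (F ∘ b) atTop (𝓝 (F x)) :=
  (hF.continuousOn x hx).tendsto.comp (tendsto_nhdsWithin_iff.2 ⟨hbx, .of_forall hb⟩)

theorem mapsTo_cellRegion (hF : d.IsCellular F) (hK : d'.K ⊆ d.K)
    (hF' : MapsTo F (d.K \ d'.K) (d.K \ d'.K)) : MapsTo F d'.cellRegion d'.cellRegion := by
  intro z hz
  by_cases hzK : z ∈ d.K
  · obtain ⟨hFz, hFz'⟩ := hF' ⟨hzK, hz.2⟩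
    exact ⟨d.subset_ball hFz, hFz'⟩
  · have hzd : z ∈ d.cellRegion := ⟨hz.1, hzK⟩
    obtain ⟨W', hW', hFW, -⟩ := hF.exists_cell _ (cellOf_mem_cells hzd)
    exact cellRegion_subset_cellRegion hK (subset_cellRegion hW' (hFW (mem_cellOf hzd)))

theorem mem_closure_cellOf (hF : d.IsCellular F) (hK : d'.K ⊆ d.K)
    (hF' : MapsTo F (d.K \ d'.K) (d.K \ d'.K)) (hz : z ∈ d'.cellRegion) (hzb : d.Adheres z b) :
    F b ∈ closure (d'.cellOf (F z)) := by
  by_cases hzK : z ∈ d.K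
  · rw [hzb.2.1 hzK]
    exact subset_closure (mem_cellOf (hF.mapsTo_cellRegion hK hF' hz))
  · have hzd : z ∈ d.cellRegion := ⟨hz.1, hzK⟩
    obtain ⟨W', hW', hFW, hFW_closure⟩ := hF.exists_cell _ (cellOf_mem_cells hzd)
    exact closure_mono (subset_cellOf hK hW' (hFW (mem_cellOf hzd)))
      (hFW_closure (hzb.2.2 hzK))

theorem eventually_cellOf_eq (hF : d.IsCellular F) (hK : d'.K ⊆ d.K)
    (hF' : MapsTo F (d.K \ d'.K) (d.K \ d'.K)) (hx : x ∈ d'.cellRegion) :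
    ∀ᶠ y in 𝓝 x, d'.cellOf (F y) = d'.cellOf (F x) := by
  by_cases hxK : x ∈ d.K
  · by_contra h
    obtain ⟨z, hzx, hz⟩ := frequently_iff_seq_forall.1
      ((not_eventually.1 h).and_eventually (d'.isOpen_cellRegion.mem_nhds hx))
    obtain ⟨ι, b, hbx, hzb⟩ := d.exists_seq_adheres hxK (fun k => (hz k).2.1) hzx
    have hFx : F x ∈ d'.cellRegion := hF.mapsTo_cellRegion hK hF' hx
    obtain ⟨k, hk⟩ := ((hF.tendsto_comp (fun k => (hzb k).1) hxK hbx).eventually_mem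
      ((d'.isOpen_cellOf (F x)).mem_nhds (mem_cellOf hFx))).exists
    have hFb : F (b k) ∈ d'.cellOf (F (z (ι k))) :=
      mem_of_mem_closure (cellOf_mem_cells (hF.mapsTo_cellRegion hK hF' (hz _).2))
        (hF.mem_closure_cellOf hK hF' (hz _).2 (hzb k))
        (subset_cellRegion (cellOf_mem_cells hFx) hk).2
    exact (hz (ι k)).1 ((cellOf_eq_of_mem hFb).trans (cellOf_eq_of_mem hk).symm)
  · have hxd : x ∈ d.cellRegion := ⟨hx.1, hxK⟩
    obtain ⟨W', hW', hFW, -⟩ := hF.exists_cell _ (cellOf_mem_cells hxd)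
    filter_upwards [(d.isOpen_cellOf x).mem_nhds (mem_cellOf hxd)] with y hy
    exact (cellOf_eq_of_mem (subset_cellOf hK hW' (hFW (mem_cellOf hxd)) (hFW hy))).symm

theorem cellOf_apply_eq (hF : d.IsCellular F) (hK : d'.K ⊆ d.K)
    (hF' : MapsTo F (d.K \ d'.K) (d.K \ d'.K)) (hU' : U' ∈ d'.cells) {x y}
    (hx : x ∈ U') (hy : y ∈ U') : d'.cellOf (F x) = d'.cellOf (F y) := by
  have hconst : IsLocallyConstant fun p : d'.cellRegion => d'.cellOf (F p) :=
    (IsLocallyConstant.iff_eventually_eq _).2 fun p =>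
      (continuous_subtype_val.tendsto p).eventually (hF.eventually_cellOf_eq hK hF' p.2)
  have hpre : IsPreconnected (((↑) : d'.cellRegion → _) ⁻¹' U') :=
    Topology.IsInducing.subtypeVal.isPreconnected_image.1 <| by
      rw [image_preimage_eq_of_subset (by simpa using subset_cellRegion hU')]
      exact isPreconnected_of_mem_cells hU'
  exact hconst.apply_eq_of_isPreconnected hpre (x := ⟨x, subset_cellRegion hU' hx⟩)
    (y := ⟨y, subset_cellRegion hU' hy⟩) hx hy

theorem mapsTo_closure (hF : d.IsCellular F) (hK : d'.K ⊆ d.K)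
    (hF' : MapsTo F (d.K \ d'.K) (d.K \ d'.K)) (hU' : U' ∈ d'.cells) (hW : W ∈ d.cells)
    (hWU' : W ⊆ U') (hFW : MapsTo F W U') : MapsTo F (closure U' ∩ d.K) (closure U') := by
  obtain ⟨w, hw⟩ := nonempty_of_mem_cells hW
  have hcell : ∀ z ∈ U', d'.cellOf (F z) = U' := fun z hz => by
    rw [hF.cellOf_apply_eq hK hF' hU' hz (hWU' hw), ← eq_cellOf hU' (hFW hw)]
  rintro x ⟨hxU', hxK⟩
  obtain ⟨z, hzU', hzx⟩ := mem_closure_iff_seq_limit.1 hxU'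
  obtain ⟨ι, b, hbx, hzb⟩ :=
    d.exists_seq_adheres hxK (fun k => (subset_cellRegion hU' (hzU' k)).1) hzx
  refine isClosed_closure.mem_of_tendsto (hF.tendsto_comp (fun k => (hzb k).1) hxK hbx)
    (.of_forall fun k => ?_)
  simpa only [Function.comp, hcell _ (hzU' (ι k))] using
    hF.mem_closure_cellOf hK hF' (subset_cellRegion hU' (hzU' (ι k))) (hzb k)

end IsCellular

end GenCellDecomp

namespace GComplex

variable {n : ℕ} {G : Type*} [Group G] {g h : G} {S U : Set (EuclideanSpace ℝ (Fin n))}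
  {x : EuclideanSpace ℝ (Fin n)}

open Classical in
noncomputable def actExt (c : GComplex n G) (g : G) (x : EuclideanSpace ℝ (Fin n)) :
    EuclideanSpace ℝ (Fin n) :=
  if hx : x ∈ c.K then c.act g ⟨x, hx⟩ else x

section Action

variable (c : GComplex n G)

theorem actExt_of_mem (hx : x ∈ c.K) : c.actExt g x = c.act g ⟨x, hx⟩ :=
  dif_pos hx

theorem mapsTo_actExt (g : G) : MapsTo (c.actExt g) c.K c.K := fun x hx =>
  c.actExt_of_mem hx ▸ (c.act g ⟨x, hx⟩).2

theorem actExt_actExt (hx : x ∈ c.K) : c.actExt g (c.actExt h x) = c.actExt (g * h) x := by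
  rw [c.actExt_of_mem hx, c.actExt_of_mem (c.act h ⟨x, hx⟩).2, c.actExt_of_mem hx, c.act_mul]

theorem invOn_actExt (g : G) : InvOn (c.actExt g⁻¹) (c.actExt g) c.K c.K := by
  have hone : ∀ x ∈ c.K, c.actExt 1 x = x := fun x hx => by rw [c.actExt_of_mem hx, c.act_one]
  refine ⟨fun x hx => ?_, fun x hx => ?_⟩
  · rw [c.actExt_actExt hx, inv_mul_cancel, hone x hx]
  · rw [c.actExt_actExt hx, mul_inv_cancel, hone x hx]

theorem continuousOn_actExt (g : G) : ContinuousOn (c.actExt g) c.K := by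
  refine continuousOn_iff_continuous_domRestrict.2 <|
    (continuous_subtype_val.comp (c.act_cont g)).congr fun x => ?_
  exact (c.actExt_of_mem x.2).symm

theorem subIm_act (g : G) (hS : S ⊆ c.K) : subIm (c.act g) S = c.actExt g '' S := by
  ext y
  constructor
  · rintro ⟨-, ⟨x, hx, rfl⟩, rfl⟩
    exact ⟨x, hx, c.actExt_of_mem x.2⟩
  · rintro ⟨x, hx, rfl⟩
    exact ⟨_, ⟨⟨x, hS hx⟩, hx, rfl⟩, (c.actExt_of_mem (hS hx)).symm⟩

theorem inv_mem_stab (hU : U ∈ c.cells) (hg : g ∈ c.stab U) : g⁻¹ ∈ c.stab U := by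
  have hUK := GenCellDecomp.closure_diff_subset hU
  have hgU : c.actExt g '' (closure U \ U) = closure U \ U := c.subIm_act g hUK ▸ hg
  show subIm _ _ = _
  rw [c.subIm_act _ hUK]
  nth_rewrite 1 [← hgU]
  exact ((c.invOn_actExt g).1.mono hUK).image_image

theorem exists_image_frontier_eq (hU : U ∈ c.cells) (hg : g ∈ c.stab U) {W}
    (hW : W ∈ c.cells) : ∃ W' ∈ c.cells,
      c.actExt g '' (closure W \ W) = closure W' \ W' ∧ (W = U → W' = U) := by
  rw [← c.subIm_act g (GenCellDecomp.closure_diff_subset hW)]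
  by_cases hWU : W = U
  · subst hWU
    exact ⟨W, hW, hg, fun _ => rfl⟩
  · obtain ⟨W', hW', hgW⟩ := c.cells_perm g W hW
    exact ⟨W', hW', hgW, fun h => absurd h hWU⟩

theorem exists_isCellular (hU : U ∈ c.cells) (hg : g ∈ c.stab U) :
    ∃ F, c.IsCellular F ∧ EqOn F (c.actExt g) c.K ∧ MapsTo F U U := by
  choose! σ hσ hσg hσU using fun W (hW : W ∈ c.cells) => c.exists_image_frontier_eq hU hg hW
  choose! τ hτ using fun W (hW : W ∈ c.cells) => GenCellDecomp.nonempty_of_mem_cells (hσ W hW)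
  classical
  set F := c.K.piecewise (c.actExt g) (τ ∘ c.cellOf)
  have hF_on : EqOn F (c.actExt g) c.K := piecewise_eqOn _ _ _
  have hF_off : ∀ z ∉ c.K, F z = τ (c.cellOf z) := fun z hz => piecewise_eq_of_notMem _ _ _ hz
  have hmaps : ∀ W ∈ c.cells, MapsTo F W (σ W) := fun W hW z hz => by
    rw [hF_off z (GenCellDecomp.subset_cellRegion hW hz).2, ← GenCellDecomp.eq_cellOf hW hz]
    exact hτ W hW
  have hmaps_closure : ∀ W ∈ c.cells, MapsTo F (closure W) (closure (σ W)) := by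
    intro W hW z hz
    by_cases hzW : z ∈ W
    · exact subset_closure (hmaps W hW hzW)
    · rw [hF_on (GenCellDecomp.closure_diff_subset hW ⟨hz, hzW⟩)]
      exact (hσg W hW ▸ mem_image_of_mem _ ⟨hz, hzW⟩ : _ ∈ closure (σ W) \ σ W).1
  refine ⟨F, ⟨(c.continuousOn_actExt g).congr hF_on, fun W hW => ?_⟩, hF_on, ?_⟩
  · exact ⟨σ W, hσ W hW, hmaps W hW, hmaps_closure W hW⟩
  · exact (hmaps U hU).mono_right (hσU U hU rfl).le

theorem mapsTo_frontier_of_mem_stab {d' : GenCellDecomp n} (hK : d'.K ⊆ c.K)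
    (hgK' : MapsTo (c.actExt g) d'.K d'.K) (hgK : MapsTo (c.actExt g) (c.K \ d'.K) (c.K \ d'.K))
    {U' : Set (EuclideanSpace ℝ (Fin n))} (hU : U ∈ c.cells) (hU' : U' ∈ d'.cells)
    (hsub : U ⊆ U') (hg : g ∈ c.stab U) :
    MapsTo (c.actExt g) (closure U' \ U') (closure U' \ U') := by
  obtain ⟨F, hF, hFg, hFU⟩ := c.exists_isCellular hU hg
  have hF' : MapsTo F (c.K \ d'.K) (c.K \ d'.K) := fun _ hx => hFg hx.1 ▸ hgK hx
  intro x hx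
  have hxK' := GenCellDecomp.closure_diff_subset hU' hx
  have hFx := hF.mapsTo_closure hK hF' hU' hU hsub (hFU.mono_right hsub) ⟨hx.1, hK hxK'⟩
  rw [hFg (hK hxK')] at hFx
  exact ⟨hFx, fun h => (GenCellDecomp.subset_cellRegion hU' h).2 (hgK' hxK')⟩

end Action

section Refinement

variable {c c' : GComplex n G}

theorem mapsTo_actExt_of_eqOn (hg : EqOn (c.actExt g) (c'.actExt g) c'.K) :
    MapsTo (c.actExt g) c'.K c'.K := fun _ hx => hg hx ▸ c'.mapsTo_actExt g hx

theorem mapsTo_actExt_diff_of_eqOn (hg : EqOn (c.actExt g⁻¹) (c'.actExt g⁻¹) c'.K) :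
    MapsTo (c.actExt g) (c.K \ c'.K) (c.K \ c'.K) := fun _ hx =>
  ⟨c.mapsTo_actExt g hx.1,
    fun h => hx.2 (c.invOn_actExt g |>.1 hx.1 ▸ mapsTo_actExt_of_eqOn hg h)⟩

end Refinement

end GComplex

/-- If the `G`-complex `c` is a refinement of the `G`-complex `c'` (i.e. `c'.K ⊆ c.K`
and the actions agree on `c'.K`), and `U ∈ 𝒰` is a cell of `c` contained in a cell
`U' ∈ 𝒰'` of `c'`, then `Stab_μ(U) ≤ Stab_{μ'}(U')`. -/
theorem stmt13 (n : ℕ) (G : Type*) [Group G] (c c' : GComplex n G)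
    (hK : c'.K ⊆ c.K)
    (hagree : ∀ g : G, ∀ p : EuclideanSpace ℝ (Fin n), ∀ (hp : p ∈ c'.K) (hp2 : p ∈ c.K),
      ((c.act g ⟨p, hp2⟩ : ↥c.K) : EuclideanSpace ℝ (Fin n)) =
        ((c'.act g ⟨p, hp⟩ : ↥c'.K) : EuclideanSpace ℝ (Fin n)))
    (U U' : Set (EuclideanSpace ℝ (Fin n))) (hU : U ∈ c.cells) (hU' : U' ∈ c'.cells)
    (hsub : U ⊆ U') :
    c.stab U ⊆ c'.stab U' := by
  have hext : ∀ g, EqOn (c.actExt g) (c'.actExt g) c'.K := fun g p hp => by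
    rw [c.actExt_of_mem (hK hp), c'.actExt_of_mem hp, hagree]
  have hmaps : ∀ g ∈ c.stab U, MapsTo (c.actExt g) (closure U' \ U') (closure U' \ U') :=
    fun g hg => c.mapsTo_frontier_of_mem_stab hK (GComplex.mapsTo_actExt_of_eqOn (hext g))
      (GComplex.mapsTo_actExt_diff_of_eqOn (hext g⁻¹)) hU hU' hsub hg
  intro g hg
  have hU'K := GenCellDecomp.closure_diff_subset hU'
  show subIm _ _ = _
  rw [c'.subIm_act g hU'K, ← image_congr ((hext g).mono hU'K)]
  exact ((c.invOn_actExt g).mono (hU'K.trans hK) (hU'K.trans hK)).bijOn (hmaps g hg)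
    (hmaps g⁻¹ (c.inv_mem_stab hU hg)) |>.image_eq
end

section
/- Let (K₁, 𝒰₁) and (K₂, 𝒰₂) be generalized cell decompositions of D^n, and for each V ∈ 𝒰₁ fix a homeomorphism Φ₁^V : (D^n, S^{n-1}) → (cl V, ∂V). Define 𝒰 = {Φ₁^V(W) : V ∈ 𝒰₁, W ∈ 𝒰₂} and K = K₁ ∪ ⋃_{V ∈ 𝒰₁} Φ₁^V(K₂). Then (K, 𝒰) is a generalized cell decomposition of D^n; in particular, every sequence of distinct elements of 𝒰 has a subsequence converging to a single point. -/
/-- The image of a subset `S ⊆ α` under a homeomorphism `↥A ≃ₜ ↥B` of subtypes. -/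
def homIm {α β : Type*} [TopologicalSpace α] [TopologicalSpace β] {A : Set α} {B : Set β} (φ : ↥A ≃ₜ ↥B) (S : Set α) : Set β :=
  Subtype.val '' (⇑φ '' (Subtype.val ⁻¹' S))

/-!
The pieces `Φ V '' W`, for cells `V` of `d₁` and `W` of `d₂`, are open, preconnected, pairwise
disjoint and cover `Dⁿ \ K`, so they are exactly the components of `Dⁿ \ K`; each inherits the
open-cell structure and the spherical boundary of `W` through the homeomorphism `Φ V`. The set `K`
is closed because inside a cell `V` of `d₁` it coincides with the closed set `Φ V '' K₂`.
A sequence of distinct pieces either has infinitely many terms in one cell `V` of `d₁`, and then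
the convergence property of `d₂` is transported by `Φ V`, or it has a subsequence lying in
pairwise distinct cells of `d₁`, and then it inherits the property of `d₁` by compactness of `Dⁿ`.
-/

open Set Metric Topology Filter Function

section SeqLimSet

variable {X Y : Type*} [TopologicalSpace X] [TopologicalSpace Y]

def seqLimSet (S : ℕ → Set X) : Set X :=
  {q | ∃ x : ℕ → X, (∀ k, x k ∈ S k) ∧ Tendsto x atTop (𝓝 q)}

def HasSubseqLimPoint (S : ℕ → Set X) : Prop :=
  ∃ φ : ℕ → ℕ, StrictMono φ ∧ ∃ p, seqLimSet (S ∘ φ) = {p}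

lemma seqLimSet_mono {S T : ℕ → Set X} (h : ∀ k, S k ⊆ T k) : seqLimSet S ⊆ seqLimSet T :=
  fun _ ⟨x, hx, hxq⟩ => ⟨x, fun k => h k (hx k), hxq⟩

lemma seqLimSet_subset_of_isClosed {S : ℕ → Set X} {C : Set X} (hC : IsClosed C)
    (h : ∀ k, S k ⊆ C) : seqLimSet S ⊆ C :=
  fun _ ⟨_, hx, hxq⟩ => hC.isSeqClosed (fun k => h k (hx k)) hxq

lemma Topology.IsClosedEmbedding.seqLimSet_image {f : X → Y} (hf : IsClosedEmbedding f)
    (S : ℕ → Set X) : seqLimSet (fun k => f '' S k) = f '' seqLimSet S := by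
  apply Subset.antisymm
  · rintro q ⟨y, hy, hyq⟩
    choose x hx hxy using hy
    obtain ⟨p, rfl⟩ : q ∈ range f :=
      hf.isClosed_range.isSeqClosed (fun k => ⟨x k, hxy k⟩) hyq
    refine ⟨p, ⟨x, hx, ?_⟩, rfl⟩
    rw [hf.tendsto_nhds_iff]
    simpa only [comp_def, hxy] using hyq
  · rintro _ ⟨q, ⟨x, hx, hxq⟩, rfl⟩
    exact ⟨f ∘ x, fun k => mem_image_of_mem f (hx k), (hf.continuous.tendsto q).comp hxq⟩

lemma HasSubseqLimPoint.of_comp {S : ℕ → Set X} {e : ℕ → ℕ} (he : StrictMono e)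
    (h : HasSubseqLimPoint (S ∘ e)) : HasSubseqLimPoint S :=
  let ⟨φ, hφ, p, hp⟩ := h
  ⟨e ∘ φ, he.comp hφ, p, hp⟩

/-- Passing to a subsequence can only enlarge `seqLimSet`, so the compactness extraction has to
come before the one provided by `hT`; hence `hT` is needed for every subsequence. -/
lemma HasSubseqLimPoint.of_subset [FirstCountableTopology X] {S T : ℕ → Set X} {K : Set X}
    (hK : IsCompact K) (hSK : ∀ k, S k ⊆ K) (hS : ∀ k, (S k).Nonempty) (hST : ∀ k, S k ⊆ T k)
    (hT : ∀ σ : ℕ → ℕ, StrictMono σ → HasSubseqLimPoint (T ∘ σ)) : HasSubseqLimPoint S := by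
  choose x hx using hS
  obtain ⟨q, -, σ, hσ, hxq⟩ := hK.tendsto_subseq fun k => hSK k (hx k)
  obtain ⟨φ, hφ, p, hp⟩ := hT σ hσ
  have hsub : seqLimSet (S ∘ (σ ∘ φ)) ⊆ {p} := hp ▸ seqLimSet_mono fun k => hST _
  have hq : q ∈ seqLimSet (S ∘ (σ ∘ φ)) := ⟨x ∘ σ ∘ φ, fun k => hx _, hxq.comp hφ.tendsto_atTop⟩
  exact ⟨σ ∘ φ, hσ.comp hφ, p, (Set.Nonempty.subset_singleton_iff ⟨q, hq⟩).1 hsub⟩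

end SeqLimSet

section ConstOrInjective

variable {γ : Type*}

lemma exists_strictMono_comp_injective (V : ℕ → γ) (h : ∀ c, {m | V m = c}.Finite) :
    ∃ e : ℕ → ℕ, StrictMono e ∧ Injective (V ∘ e) := by
  classical
  -- the first occurrences of the values of `V`
  set S := {m | ∀ j < m, V j ≠ V m}
  have hrange : V '' S = range V := by
    refine Subset.antisymm (image_subset_range V S) ?_
    rintro _ ⟨m, rfl⟩
    have hex : ∃ j, V j = V m := ⟨m, rfl⟩
    exact ⟨Nat.find hex, fun j hj hjm => Nat.find_min hex hj (hjm.trans (Nat.find_spec hex)),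
      Nat.find_spec hex⟩
  have hrange_inf : (range V).Infinite := fun hfin =>
    infinite_univ (by simpa using hfin.preimage' fun c _ => h c)
  have hS : S.Infinite := Infinite.of_image V (hrange ▸ hrange_inf)
  have he := Nat.nth_strictMono hS
  refine ⟨Nat.nth (· ∈ S), he, fun i j hij => ?_⟩
  by_contra hne
  rcases lt_or_gt_of_ne hne with hlt | hlt
  · exact Nat.nth_mem_of_infinite hS j _ (he hlt) hij
  · exact Nat.nth_mem_of_infinite hS i _ (he hlt) hij.symm

lemma exists_strictMono_comp_const_or_injective (V : ℕ → γ) :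
    (∃ e : ℕ → ℕ, StrictMono e ∧ ∃ c, ∀ k, V (e k) = c) ∨
      ∃ e : ℕ → ℕ, StrictMono e ∧ Injective (V ∘ e) := by
  by_cases hc : ∃ c, {m | V m = c}.Infinite
  · obtain ⟨c, hc⟩ := hc
    exact Or.inl ⟨_, Nat.nth_strictMono hc, c, Nat.nth_mem_of_infinite hc⟩
  · push Not at hc
    exact Or.inr (exists_strictMono_comp_injective V hc)

end ConstOrInjective

section HomIm

variable {α β : Type*} [TopologicalSpace α] [TopologicalSpace β] {A : Set α} {B : Set β}
  (φ : A ≃ₜ B)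

lemma mem_homIm {S : Set α} {y : β} : y ∈ homIm φ S ↔ ∃ a : A, (a : α) ∈ S ∧ (φ a : β) = y := by
  constructor
  · rintro ⟨_, ⟨a, ha, rfl⟩, rfl⟩
    exact ⟨a, ha, rfl⟩
  · rintro ⟨a, ha, rfl⟩
    exact ⟨φ a, ⟨a, ha, rfl⟩, rfl⟩

lemma homIm_eq_image (S : Set α) : homIm φ S = ((↑) ∘ φ) '' ((↑) ⁻¹' S) :=
  (image_comp _ _ _).symm

lemma homIm_mono {S T : Set α} (h : S ⊆ T) : homIm φ S ⊆ homIm φ T :=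
  image_mono (image_mono (preimage_mono h))

lemma homIm_subset (S : Set α) : homIm φ S ⊆ B :=
  (image_subset_range _ _).trans Subtype.range_val.subset

lemma homIm_diff (S T : Set α) : homIm φ (S \ T) = homIm φ S \ homIm φ T := by
  rw [homIm, preimage_sdiff, image_sdiff φ.injective, image_sdiff Subtype.val_injective]; rfl

lemma homIm_self : homIm φ A = B := by
  rw [homIm, Subtype.coe_preimage_self, image_univ, φ.range_coe, image_univ, Subtype.range_val]

lemma homIm_nonempty {S : Set α} (hS : (S ∩ A).Nonempty) : (homIm φ S).Nonempty :=
  let ⟨x, hxS, hxA⟩ := hS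
  ⟨_, (mem_homIm φ).2 ⟨⟨x, hxA⟩, hxS, rfl⟩⟩

lemma homIm_singleton {p : α} (hp : p ∈ A) : homIm φ {p} = {(φ ⟨p, hp⟩ : β)} := by
  ext y
  rw [mem_homIm, mem_singleton_iff]
  constructor
  · rintro ⟨⟨a, ha⟩, rfl : a = p, rfl⟩
    rfl
  · rintro rfl
    exact ⟨⟨p, hp⟩, rfl, rfl⟩

noncomputable def homImHomeomorph {S : Set α} (hS : S ⊆ A) : S ≃ₜ homIm φ S :=
  (Homeomorph.setCongr (Subtype.image_preimage_coe A S ▸ (inter_eq_right.2 hS).symm)).trans <|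
    (IsEmbedding.subtypeVal.homeomorphImage _).symm.trans <|
      ((IsEmbedding.subtypeVal.comp φ.isEmbedding).homeomorphImage _).trans <|
        Homeomorph.setCongr (homIm_eq_image φ S).symm

lemma closure_homIm (hB : IsClosed B) {S : Set α} (hS : S ⊆ A) :
    closure (homIm φ S) = homIm φ (closure S) := by
  rw [homIm, hB.isClosedEmbedding_subtypeVal.closure_image_eq, ← φ.image_closure,
    IsEmbedding.subtypeVal.closure_eq_preimage_closure_image, Subtype.image_preimage_coe,
    inter_eq_right.2 hS, homIm]

lemma isClosed_homIm (hB : IsClosed B) {S : Set α} (hS : IsClosed S) (hSA : S ⊆ A) :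
    IsClosed (homIm φ S) := by
  rw [← closure_eq_iff_isClosed, closure_homIm φ hB hSA, hS.closure_eq]

lemma isOpen_homIm {S : Set α} {U : Set β} (hS : IsOpen S) (hU : IsOpen U) (hUB : U ⊆ B)
    (hSU : homIm φ S ⊆ U) : IsOpen (homIm φ S) := by
  obtain ⟨O, hO, hOeq⟩ :=
    isOpen_induced_iff.1 (φ.isOpenMap _ (hS.preimage continuous_subtype_val))
  rw [homIm, ← hOeq, Subtype.image_preimage_coe] at hSU ⊢
  have hBO : B ∩ O = U ∩ O :=
    Subset.antisymm (subset_inter hSU inter_subset_right) (inter_subset_inter_left O hUB)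
  rw [hBO]
  exact hU.inter hO

lemma IsPreconnected.homIm {S : Set α} (hS : IsPreconnected S) (hSA : S ⊆ A) :
    IsPreconnected (homIm φ S) := by
  have hpre : IsPreconnected ((↑) ⁻¹' S : Set A) := by
    rwa [← IsInducing.subtypeVal.isPreconnected_image, Subtype.image_preimage_coe,
      inter_eq_right.2 hSA]
  rw [homIm_eq_image]
  exact hpre.image _ (continuous_subtype_val.comp φ.continuous).continuousOn

lemma seqLimSet_homIm (hA : IsClosed A) (hB : IsClosed B) {S : ℕ → Set α} (hSA : ∀ k, S k ⊆ A) :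
    seqLimSet (fun k => homIm φ (S k)) = homIm φ (seqLimSet S) := by
  have hS : S = fun k => (↑) '' ((↑) ⁻¹' S k : Set A) := by
    ext1 k; rw [Subtype.image_preimage_coe, inter_eq_right.2 (hSA k)]
  simp_rw [homIm_eq_image]
  rw [(hB.isClosedEmbedding_subtypeVal.comp φ.isClosedEmbedding).seqLimSet_image]
  conv_rhs => rw [hS, hA.isClosedEmbedding_subtypeVal.seqLimSet_image,
    preimage_image_eq _ Subtype.val_injective]

lemma HasSubseqLimPoint.homIm (hA : IsClosed A) (hB : IsClosed B) {S : ℕ → Set α}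
    (hSA : ∀ k, S k ⊆ A) (h : HasSubseqLimPoint S) :
    HasSubseqLimPoint fun k => homIm φ (S k) := by
  obtain ⟨ψ, hψ, p, hp⟩ := h
  have hpA : p ∈ A := seqLimSet_subset_of_isClosed hA (fun k => hSA (ψ k)) (hp ▸ rfl)
  exact ⟨ψ, hψ, _, (seqLimSet_homIm φ hA hB (S := S ∘ ψ) fun k => hSA (ψ k)).trans
    (by rw [hp, homIm_singleton φ hpA])⟩

end HomIm

section Partition

variable {X : Type*} [TopologicalSpace X]

lemma connectedComponentIn_eq_of_isOpen_partition {O : Set X} {𝒞 : Set (Set X)}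
    (hopen : ∀ P ∈ 𝒞, IsOpen P) (hconn : ∀ P ∈ 𝒞, IsPreconnected P)
    (hdisj : 𝒞.PairwiseDisjoint id) (hcover : ⋃₀ 𝒞 = O) {P : Set X} (hP : P ∈ 𝒞) {x : X}
    (hx : x ∈ P) : connectedComponentIn O x = P := by
  have hPO : P ⊆ O := hcover ▸ subset_sUnion_of_mem hP
  refine Subset.antisymm ?_ ((hconn P hP).subset_connectedComponentIn hx hPO)
  refine isPreconnected_connectedComponentIn.subset_left_of_subset_union (hopen P hP)
    (v := ⋃₀ (𝒞 \ {P})) (isOpen_sUnion fun Q hQ => hopen Q hQ.1)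
    (disjoint_sUnion_right.2 fun Q hQ => hdisj hP hQ.1 (Ne.symm hQ.2)) ?_
    ⟨x, mem_connectedComponentIn (hPO hx), hx⟩
  intro y hy
  obtain ⟨Q, hQ, hyQ⟩ := (hcover ▸ connectedComponentIn_subset O x hy : y ∈ ⋃₀ 𝒞)
  by_cases hQP : Q = P
  · exact Or.inl (hQP ▸ hyQ)
  · exact Or.inr ⟨Q, ⟨hQ, hQP⟩, hyQ⟩

end Partition

namespace GenCellDecomp

variable {n : ℕ}

local notation "𝔼" => EuclideanSpace ℝ (Fin n)

section Basic

variable (d : GenCellDecomp n)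

lemma closedBall_diff_eq_ball_diff : closedBall (0 : 𝔼) 1 \ d.K = ball 0 1 \ d.K := by
  refine Subset.antisymm (fun x hx => ⟨?_, hx.2⟩) (sdiff_subset_sdiff_left ball_subset_closedBall)
  refine lt_of_le_of_ne (mem_closedBall.1 hx.1) fun h => hx.2 (d.sphere_subset ?_)
  exact mem_sphere.2 h

lemma isOpen_closedBall_diff : IsOpen (closedBall (0 : 𝔼) 1 \ d.K) := by
  rw [closedBall_diff_eq_ball_diff]
  exact isOpen_ball.sdiff d.isClosed

lemma connectedComponentIn_mem_cells {x : 𝔼} (hx : x ∈ closedBall 0 1 \ d.K) :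
    connectedComponentIn (closedBall 0 1 \ d.K) x ∈ d.cells :=
  d.cells_eq ▸ ⟨x, hx, rfl⟩

variable {d} {V V' : Set (EuclideanSpace ℝ (Fin n))}

lemma subset_closedBall_diff_of_mem (hV : V ∈ d.cells) : V ⊆ closedBall 0 1 \ d.K := by
  rw [d.cells_eq] at hV
  obtain ⟨x, -, rfl⟩ := hV
  exact connectedComponentIn_subset _ _

lemma subset_closedBall_of_mem (hV : V ∈ d.cells) : V ⊆ closedBall 0 1 :=
  (subset_closedBall_diff_of_mem hV).trans sdiff_subset

lemma subset_ball_of_mem (hV : V ∈ d.cells) : V ⊆ ball 0 1 :=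
  (d.closedBall_diff_eq_ball_diff ▸ subset_closedBall_diff_of_mem hV).trans sdiff_subset

lemma closure_subset_closedBall_of_mem (hV : V ∈ d.cells) : closure V ⊆ closedBall 0 1 :=
  closure_minimal (subset_closedBall_of_mem hV) isClosed_closedBall

lemma isOpen_of_mem (hV : V ∈ d.cells) : IsOpen V := by
  rw [d.cells_eq] at hV
  obtain ⟨x, -, rfl⟩ := hV
  exact d.isOpen_closedBall_diff.connectedComponentIn

lemma isPreconnected_of_mem (hV : V ∈ d.cells) : IsPreconnected V := by
  rw [d.cells_eq] at hV
  obtain ⟨x, -, rfl⟩ := hV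
  exact isPreconnected_connectedComponentIn

lemma nonempty_of_mem (hV : V ∈ d.cells) : V.Nonempty := by
  rw [d.cells_eq] at hV
  obtain ⟨x, hx, rfl⟩ := hV
  exact ⟨x, mem_connectedComponentIn hx⟩

lemma eq_of_mem_of_mem (hV : V ∈ d.cells) (hV' : V' ∈ d.cells) {x : 𝔼} (hx : x ∈ V)
    (hx' : x ∈ V') : V = V' := by
  rw [d.cells_eq] at hV hV'
  obtain ⟨y, -, rfl⟩ := hV
  obtain ⟨y', -, rfl⟩ := hV'
  rw [connectedComponentIn_eq hx, connectedComponentIn_eq hx']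

lemma eq_of_mem_of_mem_closure (hV : V ∈ d.cells) (hV' : V' ∈ d.cells) {x : 𝔼} (hx : x ∈ V)
    (hx' : x ∈ closure V') : V = V' :=
  let ⟨_, hyV, hyV'⟩ := mem_closure_iff.1 hx' V (isOpen_of_mem hV) hx
  eq_of_mem_of_mem hV hV' hyV hyV'

end Basic

section Refine

variable (d₁ d₂ : GenCellDecomp n)
  (Φ : (V : Set (EuclideanSpace ℝ (Fin n))) → V ∈ d₁.cells →
    (closedBall (0 : EuclideanSpace ℝ (Fin n)) 1 ≃ₜ closure V))
  (hΦ : ∀ (V : Set (EuclideanSpace ℝ (Fin n))) (hV : V ∈ d₁.cells),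
    homIm (Φ V hV) (sphere 0 1) = closure V \ V)

def refineK : Set 𝔼 :=
  d₁.K ∪ ⋃ V : d₁.cells, homIm (Φ V.1 V.2) d₂.K

def refineCells : Set (Set 𝔼) :=
  {C | ∃ (V : Set 𝔼) (hV : V ∈ d₁.cells), ∃ W ∈ d₂.cells, C = homIm (Φ V hV) W}

lemma refineK_subset_closedBall : refineK d₁ d₂ Φ ⊆ closedBall 0 1 := by
  rintro x (hx | hx)
  · exact d₁.subset_ball hx
  · obtain ⟨V, hxV⟩ := mem_iUnion.1 hx
    exact closure_subset_closedBall_of_mem V.2 (homIm_subset _ _ hxV)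

lemma sphere_subset_refineK : sphere 0 1 ⊆ refineK d₁ d₂ Φ :=
  fun _ hx => Or.inl (d₁.sphere_subset hx)

lemma inter_refineK_subset {V : Set 𝔼} (hV : V ∈ d₁.cells) :
    V ∩ refineK d₁ d₂ Φ ⊆ homIm (Φ V hV) d₂.K := by
  rintro x ⟨hxV, hx | hx⟩
  · exact absurd hx (subset_closedBall_diff_of_mem hV hxV).2
  · obtain ⟨⟨V', hV'⟩, hxV'⟩ := mem_iUnion.1 hx
    obtain rfl := eq_of_mem_of_mem_closure hV hV' hxV (homIm_subset _ _ hxV')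
    exact hxV'

lemma isClosed_refineK : IsClosed (refineK d₁ d₂ Φ) := by
  refine isClosed_of_closure_subset fun p hp => ?_
  by_contra hpK
  have hp₁ : p ∈ closedBall 0 1 \ d₁.K :=
    ⟨closure_minimal (refineK_subset_closedBall d₁ d₂ Φ) isClosed_closedBall hp,
      fun h => hpK (Or.inl h)⟩
  have hV := d₁.connectedComponentIn_mem_cells hp₁
  set V := connectedComponentIn (closedBall 0 1 \ d₁.K) p
  have hsub : V ∩ closure (refineK d₁ d₂ Φ) ⊆ homIm (Φ V hV) d₂.K :=
    calc V ∩ closure (refineK d₁ d₂ Φ) ⊆ closure (V ∩ refineK d₁ d₂ Φ) :=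
          (isOpen_of_mem hV).inter_closure
      _ ⊆ closure (homIm (Φ V hV) d₂.K) := closure_mono (inter_refineK_subset d₁ d₂ Φ hV)
      _ = homIm (Φ V hV) d₂.K :=
          (isClosed_homIm _ isClosed_closure d₂.isClosed d₂.subset_ball).closure_eq
  exact hpK (Or.inr (mem_iUnion.2 ⟨⟨V, hV⟩, hsub ⟨mem_connectedComponentIn hp₁, hp⟩⟩))

lemma exists_mem_homIm_of_mem_diff_refineK {x : 𝔼} (hx : x ∈ closedBall 0 1 \ refineK d₁ d₂ Φ) :
    ∃ (V : Set 𝔼) (hV : V ∈ d₁.cells), ∃ W ∈ d₂.cells, x ∈ homIm (Φ V hV) W := by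
  have hx₁ : x ∈ closedBall 0 1 \ d₁.K := ⟨hx.1, fun h => hx.2 (Or.inl h)⟩
  have hV := d₁.connectedComponentIn_mem_cells hx₁
  have hxV : x ∈ homIm (Φ _ hV) (closedBall 0 1) := by
    rw [homIm_self]
    exact subset_closure (mem_connectedComponentIn hx₁)
  obtain ⟨a, -, ha⟩ := (mem_homIm _).1 hxV
  have ha₂ : (a : 𝔼) ∈ closedBall 0 1 \ d₂.K :=
    ⟨a.2, fun h => hx.2 (Or.inr (mem_iUnion.2 ⟨⟨_, hV⟩, (mem_homIm _).2 ⟨a, h, ha⟩⟩))⟩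
  exact ⟨_, hV, _, d₂.connectedComponentIn_mem_cells ha₂,
    (mem_homIm _).2 ⟨a, mem_connectedComponentIn ha₂, ha⟩⟩

lemma nonempty_of_mem_refineCells {P : Set 𝔼} (hP : P ∈ refineCells d₁ d₂ Φ) : P.Nonempty := by
  obtain ⟨V, hV, W, hW, rfl⟩ := hP
  obtain ⟨w, hw⟩ := nonempty_of_mem hW
  exact homIm_nonempty _ ⟨w, hw, subset_closedBall_of_mem hW hw⟩

lemma nonempty_homeomorph_ball_of_mem_refineCells {P : Set 𝔼} (hP : P ∈ refineCells d₁ d₂ Φ) :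
    Nonempty (P ≃ₜ ball (0 : 𝔼) 1) := by
  obtain ⟨V, hV, W, hW, rfl⟩ := hP
  exact ⟨(homImHomeomorph _ (subset_closedBall_of_mem hW)).symm.trans (d₂.cell_int W hW).some⟩

lemma nonempty_homeomorph_sphere_of_mem_refineCells {P : Set 𝔼}
    (hP : P ∈ refineCells d₁ d₂ Φ) : Nonempty (↥(closure P \ P) ≃ₜ sphere (0 : 𝔼) 1) := by
  obtain ⟨V, hV, W, hW, rfl⟩ := hP
  have hbdry : closure (homIm (Φ V hV) W) \ homIm (Φ V hV) W = homIm (Φ V hV) (closure W \ W) := by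
    rw [homIm_diff, closure_homIm _ isClosed_closure (subset_closedBall_of_mem hW)]
  exact ⟨(Homeomorph.setCongr hbdry).trans <| (homImHomeomorph _ <|
    sdiff_subset.trans (closure_subset_closedBall_of_mem hW)).symm.trans (d₂.cell_bdry W hW).some⟩

include hΦ

lemma homIm_ball {V : Set 𝔼} (hV : V ∈ d₁.cells) : homIm (Φ V hV) (ball 0 1) = V := by
  rw [← closedBall_sdiff_sphere, homIm_diff, homIm_self, hΦ V hV,
    sdiff_sdiff_cancel_left subset_closure]

variable {d₁ d₂ Φ}

lemma homIm_subset_of_mem_cells {V W : Set 𝔼} (hV : V ∈ d₁.cells) (hW : W ∈ d₂.cells) :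
    homIm (Φ V hV) W ⊆ V :=
  (homIm_mono _ (subset_ball_of_mem hW)).trans (homIm_ball d₁ Φ hΦ hV).le

lemma homIm_subset_diff_refineK {V W : Set 𝔼} (hV : V ∈ d₁.cells) (hW : W ∈ d₂.cells) :
    homIm (Φ V hV) W ⊆ closedBall 0 1 \ refineK d₁ d₂ Φ := by
  intro y hy
  have hyV := homIm_subset_of_mem_cells hΦ hV hW hy
  refine ⟨subset_closedBall_of_mem hV hyV, fun hyK => ?_⟩
  rw [← sdiff_eq_left.2 (subset_sdiff.1 (subset_closedBall_diff_of_mem hW)).2, homIm_diff] at hy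
  exact hy.2 (inter_refineK_subset d₁ d₂ Φ hV ⟨hyV, hyK⟩)

lemma eq_of_mem_refineCells {P P' : Set 𝔼} (hP : P ∈ refineCells d₁ d₂ Φ)
    (hP' : P' ∈ refineCells d₁ d₂ Φ) {y : 𝔼} (hy : y ∈ P) (hy' : y ∈ P') : P = P' := by
  obtain ⟨V, hV, W, hW, rfl⟩ := hP
  obtain ⟨V', hV', W', hW', rfl⟩ := hP'
  obtain rfl := eq_of_mem_of_mem hV hV' (homIm_subset_of_mem_cells hΦ hV hW hy)
    (homIm_subset_of_mem_cells hΦ hV' hW' hy')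
  obtain ⟨a, ha, rfl⟩ := (mem_homIm _).1 hy
  obtain ⟨a', ha', haa'⟩ := (mem_homIm _).1 hy'
  obtain rfl := (Φ V hV).injective (Subtype.ext haa')
  rw [eq_of_mem_of_mem hW hW' ha ha']

lemma sUnion_refineCells : ⋃₀ refineCells d₁ d₂ Φ = closedBall 0 1 \ refineK d₁ d₂ Φ := by
  refine Subset.antisymm ?_ fun x hx => ?_
  · rintro x ⟨_, ⟨V, hV, W, hW, rfl⟩, hx⟩
    exact homIm_subset_diff_refineK hΦ hV hW hx
  · obtain ⟨V, hV, W, hW, hxP⟩ := exists_mem_homIm_of_mem_diff_refineK d₁ d₂ Φ hx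
    exact ⟨_, ⟨V, hV, W, hW, rfl⟩, hxP⟩

lemma refineCells_eq : refineCells d₁ d₂ Φ = {C | ∃ x ∈ closedBall 0 1 \ refineK d₁ d₂ Φ,
    C = connectedComponentIn (closedBall 0 1 \ refineK d₁ d₂ Φ) x} := by
  have hopen : ∀ P ∈ refineCells d₁ d₂ Φ, IsOpen P := by
    rintro _ ⟨V, hV, W, hW, rfl⟩
    exact isOpen_homIm _ (isOpen_of_mem hW) (isOpen_of_mem hV) subset_closure
      (homIm_subset_of_mem_cells hΦ hV hW)
  have hconn : ∀ P ∈ refineCells d₁ d₂ Φ, IsPreconnected P := by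
    rintro _ ⟨V, hV, W, hW, rfl⟩
    exact (isPreconnected_of_mem hW).homIm _ (subset_closedBall_of_mem hW)
  have hdisj : (refineCells d₁ d₂ Φ).PairwiseDisjoint id := fun P hP P' hP' hne =>
    disjoint_left.2 fun _ hy hy' => hne (eq_of_mem_refineCells hΦ hP hP' hy hy')
  have hcomp : ∀ P ∈ refineCells d₁ d₂ Φ, ∀ x ∈ P,
      connectedComponentIn (closedBall 0 1 \ refineK d₁ d₂ Φ) x = P := fun P hP x hx =>
    connectedComponentIn_eq_of_isOpen_partition hopen hconn hdisj (sUnion_refineCells hΦ) hP hx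
  ext C
  constructor
  · intro hC
    obtain ⟨x, hx⟩ := nonempty_of_mem_refineCells d₁ d₂ Φ hC
    exact ⟨x, sUnion_refineCells hΦ ▸ ⟨C, hC, hx⟩, (hcomp C hC x hx).symm⟩
  · rintro ⟨x, hx, rfl⟩
    obtain ⟨_, hP, hxP⟩ := (sUnion_refineCells hΦ).symm ▸ hx
    rwa [hcomp _ hP x hxP]

lemma hasSubseqLimPoint_of_mem_refineCells {U : ℕ → Set 𝔼}
    (hU : ∀ m, U m ∈ refineCells d₁ d₂ Φ) (hinj : Injective U) : HasSubseqLimPoint U := by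
  choose V hV W hW hUeq using hU
  let V' : ℕ → d₁.cells := fun m => ⟨V m, hV m⟩
  have hUeq' : ∀ m, U m = homIm (Φ (V' m).1 (V' m).2) (W m) := hUeq
  have hUV : ∀ m, U m ⊆ V m := fun m => by
    rw [hUeq m]
    exact homIm_subset_of_mem_cells hΦ (hV m) (hW m)
  rcases exists_strictMono_comp_const_or_injective V' with ⟨e, he, c, hc⟩ | ⟨e, he, hVe⟩
  · have hUe : U ∘ e = fun k => homIm (Φ c.1 c.2) (W (e k)) := by
      ext1 k
      rw [comp_apply, hUeq', hc]
    have hWe : Injective (W ∘ e) := fun i j h =>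
      he.injective (hinj (by rw [hUeq', hUeq', hc, hc]; exact congrArg _ h))
    exact .of_comp he (hUe ▸ HasSubseqLimPoint.homIm _ isClosed_closedBall isClosed_closure
      (fun k => subset_closedBall_of_mem (hW (e k))) (d₂.subconv (W ∘ e) (fun k => hW _) hWe))
  · exact .of_comp he (.of_subset (isCompact_closedBall 0 1)
      (fun k => (hUV (e k)).trans (subset_closedBall_of_mem (hV _)))
      (fun k => nonempty_of_mem_refineCells d₁ d₂ Φ ⟨_, _, _, hW _, hUeq (e k)⟩)
      (fun k => hUV (e k)) fun σ hσ =>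
        d₁.subconv _ (fun k => hV _) fun i j h => hσ.injective (hVe (Subtype.ext h)))

variable (d₁ d₂ Φ) in
def refine : GenCellDecomp n where
  K := refineK d₁ d₂ Φ
  isClosed := isClosed_refineK d₁ d₂ Φ
  subset_ball := refineK_subset_closedBall d₁ d₂ Φ
  sphere_subset := sphere_subset_refineK d₁ d₂ Φ
  cells := refineCells d₁ d₂ Φ
  cells_eq := refineCells_eq hΦ
  cell_int _ := nonempty_homeomorph_ball_of_mem_refineCells d₁ d₂ Φ
  cell_bdry _ := nonempty_homeomorph_sphere_of_mem_refineCells d₁ d₂ Φ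
  subconv _ := hasSubseqLimPoint_of_mem_refineCells hΦ

end Refine

end GenCellDecomp

/-- Refining one generalized cell decomposition by another.  Given generalized cell
decompositions `(K₁, 𝒰₁)` and `(K₂, 𝒰₂)` of `Dⁿ` and, for each cell `V ∈ 𝒰₁`, a
homeomorphism `Φ V : (Dⁿ, S^{n-1}) → (cl V, ∂V)`, the pair given by
`K = K₁ ∪ ⋃_{V ∈ 𝒰₁} Φ V (K₂)` and `𝒰 = {Φ V (W) : V ∈ 𝒰₁, W ∈ 𝒰₂}` is again a
generalized cell decomposition of `Dⁿ`; in particular every sequence of distinct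
elements of `𝒰` has a subsequence converging to a single point. -/
theorem stmt14 (n : ℕ) (d₁ d₂ : GenCellDecomp n)
    (Φ : (V : Set (EuclideanSpace ℝ (Fin n))) → V ∈ d₁.cells →
      (↥(Metric.closedBall (0 : EuclideanSpace ℝ (Fin n)) 1) ≃ₜ ↥(closure V)))
    (hΦ : ∀ (V : Set (EuclideanSpace ℝ (Fin n))) (hV : V ∈ d₁.cells),
      homIm (Φ V hV) (Metric.sphere (0 : EuclideanSpace ℝ (Fin n)) 1) = closure V \ V) :
    ∃ d : GenCellDecomp n,
      d.K = d₁.K ∪ (⋃ (V : ↥d₁.cells), homIm (Φ V.1 V.2) d₂.K) ∧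
      d.cells = {C | ∃ (V : Set (EuclideanSpace ℝ (Fin n))) (hV : V ∈ d₁.cells),
        ∃ W ∈ d₂.cells, C = homIm (Φ V hV) W} :=
  ⟨GenCellDecomp.refine d₁ d₂ Φ hΦ, rfl, rfl⟩
end

section
/- There is an embedding of the (n-1)-triod Υ^{n-1} into the Sierpinski space M^n_{n-1} ⊆ I^n whose image is disjoint from every peripheral sphere. Concretely: if x₁ ∈ 𝒞 is not an endpoint of a complementary interval of the Cantor set 𝒞, then {x₁} × int(I^{n-1}) is contained in M^n_{n-1} and is disjoint from all peripheral spheres, and one can find inside M^n_{n-1} a closed (n-1)-disk together with an arc attached at an interior point, disjoint from all peripheral spheres. -/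
/-- The unit cube `Iⁿ` in `ℝⁿ` (with `n` coordinates indexed by `Fin n`). -/
def unitCube (n : ℕ) : Set (Fin n → ℝ) := {x | ∀ i, x i ∈ Set.Icc (0 : ℝ) 1}

/-- The Sierpinski space `M^n_{n-1} ⊆ Iⁿ`: points of the cube having at least one
coordinate in the middle-thirds Cantor set. -/
def sierpinskiCarpet (n : ℕ) : Set (Fin n → ℝ) :=
  {x ∈ unitCube n | ∃ i, x i ∈ cantorSet}

/-- The peripheral sphere of the complementary component of `M^n_{n-1}` in `Iⁿ`
containing the point `y`. -/
def peripheralSphere (n : ℕ) (y : Fin n → ℝ) : Set (Fin n → ℝ) :=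
  closure (connectedComponentIn (unitCube n \ sierpinskiCarpet n) y) \
    connectedComponentIn (unitCube n \ sierpinskiCarpet n) y

/-! Projecting to a coordinate maps every complementary component of the carpet into a
complementary interval of `𝒞`. Hence a point with one coordinate in the closure of no such
interval misses every peripheral sphere: this covers the slice `x 0 = x₁` and also the slice
`x 1 = 1/4`, since `1/4` is approached from both sides by the Cantor points
`1/4 + (x - 1/4) / 9 ^ k`. The triod is a round disk in the first slice together with an arc
leaving its centre along the first coordinate inside the second slice. -/

open Set Topology

lemma notMem_closure_connectedComponentIn_of_two_sided {α : Type*} [LinearOrder α]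
    [TopologicalSpace α] [OrderClosedTopology α] {s : Set α} {q : α} (hq : q ∉ s)
    (hlt : ∀ c < q, ∃ z ∉ s, z ∈ Ioo c q) (hgt : ∀ c > q, ∃ z ∉ s, z ∈ Ioo q c) (y : α) :
    q ∉ closure (connectedComponentIn s y) := by
  by_cases hy : y ∈ s
  swap
  · simp [connectedComponentIn_eq_empty hy]
  set C := connectedComponentIn s y
  have hCs : C ⊆ s := connectedComponentIn_subset s y
  have hyC : y ∈ C := mem_connectedComponentIn hy
  have hC : OrdConnected C := isPreconnected_connectedComponentIn.ordConnected
  rcases lt_or_gt_of_ne (show y ≠ q by rintro rfl; exact hq hy) with hyq | hyq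
  · obtain ⟨z, hzs, hyz, hzq⟩ := hlt y hyq
    have hCz : C ⊆ Iic z := fun c hc ↦ not_lt.1 fun hzc ↦
      hzs (hCs (hC.out hyC hc ⟨hyz.le, hzc.le⟩))
    exact fun h ↦ hzq.not_ge (closure_minimal hCz isClosed_Iic h)
  · obtain ⟨z, hzs, hqz, hzy⟩ := hgt y hyq
    have hCz : C ⊆ Ici z := fun c hc ↦ not_lt.1 fun hcz ↦
      hzs (hCs (hC.out hc hyC ⟨hcz.le, hzy.le⟩))
    exact fun h ↦ hqz.not_ge (closure_minimal hCz isClosed_Ici h)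

lemma Continuous.mapsTo_closure_connectedComponentIn {X Y : Type*} [TopologicalSpace X]
    [TopologicalSpace Y] {f : X → Y} (hf : Continuous f) {s : Set X} {t : Set Y}
    (hst : MapsTo f s t) (x : X) :
    MapsTo f (closure (connectedComponentIn s x)) (closure (connectedComponentIn t (f x))) := by
  by_cases hx : x ∈ s
  · refine MapsTo.closure ?_ hf
    exact (hf.continuousOn.mapsTo_connectedComponentIn hx).mono_right
      (connectedComponentIn_mono _ hst.image_subset)
  · simp [connectedComponentIn_eq_empty hx, mapsTo_empty]

def AvoidsCantorGapClosures (q : ℝ) : Prop :=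
  ∀ y ∈ Icc (0 : ℝ) 1 \ cantorSet,
    q ∉ closure (connectedComponentIn (Icc (0 : ℝ) 1 \ cantorSet) y)

lemma three_quarters_mem_cantorSet : (3 / 4 : ℝ) ∈ cantorSet :=
  mem_iInter.2 fun n ↦ (quarters_mem_preCantorSet n).2

/-- `x ↦ (2 + x) / 9` maps the Cantor set into itself and contracts towards its fixed
point `1/4`. -/
lemma quarter_add_mul_pow_mem_cantorSet {x : ℝ} (hx : x ∈ cantorSet) (k : ℕ) :
    1 / 4 + (x - 1 / 4) * (1 / 9) ^ k ∈ cantorSet := by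
  induction k with
  | zero => simpa using hx
  | succ k ih =>
    have h : (2 + (1 / 4 + (x - 1 / 4) * (1 / 9) ^ k)) / 3 ∈ cantorSet := by
      rw [cantorSet_eq_union_halves]; exact Or.inr ⟨_, ih, rfl⟩
    have h' : (2 + (1 / 4 + (x - 1 / 4) * (1 / 9) ^ k)) / 3 / 3 ∈ cantorSet := by
      rw [cantorSet_eq_union_halves]; exact Or.inl ⟨_, h, rfl⟩
    convert h' using 1
    ring

lemma avoidsCantorGapClosures_quarter : AvoidsCantorGapClosures (1 / 4) := by
  have hsmall : ∀ ε > (0 : ℝ), ∃ k : ℕ, (1 / 9 : ℝ) ^ k < ε := fun ε hε ↦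
    exists_pow_lt_of_lt_one hε (by norm_num)
  refine fun y _ ↦ notMem_closure_connectedComponentIn_of_two_sided
    (fun h ↦ h.2 quarter_mem_cantorSet) (fun c hc ↦ ?_) (fun c hc ↦ ?_) y
  · obtain ⟨k, hk⟩ := hsmall (4 * (1 / 4 - c)) (by linarith)
    have := pow_pos (show (0 : ℝ) < 1 / 9 by norm_num) k
    exact ⟨_, fun h ↦ h.2 (quarter_add_mul_pow_mem_cantorSet zero_mem_cantorSet k),
      by linarith, by linarith⟩
  · obtain ⟨k, hk⟩ := hsmall (2 * (c - 1 / 4)) (by linarith)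
    have := pow_pos (show (0 : ℝ) < 1 / 9 by norm_num) k
    exact ⟨_, fun h ↦ h.2 (quarter_add_mul_pow_mem_cantorSet three_quarters_mem_cantorSet k),
      by linarith, by linarith⟩

lemma half_notMem_cantorSet : (1 / 2 : ℝ) ∉ cantorSet := by
  rw [cantorSet_eq_union_halves]
  rintro (⟨x, hx, h⟩ | ⟨x, hx, h⟩) <;>
    linarith [(cantorSet_subset_unitInterval hx).1, (cantorSet_subset_unitInterval hx).2]

lemma mapsTo_apply_unitCube_diff_sierpinskiCarpet {m : ℕ} (j : Fin m) :
    MapsTo (fun x ↦ x j) (unitCube m \ sierpinskiCarpet m) (Icc 0 1 \ cantorSet) :=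
  fun _ hx ↦ ⟨hx.1 j, fun hc ↦ hx.2 ⟨hx.1, j, hc⟩⟩

lemma notMem_closure_connectedComponentIn_of_apply {m : ℕ} {x : Fin m → ℝ} {j : Fin m}
    (hx : AvoidsCantorGapClosures (x j)) (y : Fin m → ℝ) :
    x ∉ closure (connectedComponentIn (unitCube m \ sierpinskiCarpet m) y) := by
  intro hxy
  by_cases hy : y ∈ unitCube m \ sierpinskiCarpet m
  · exact hx (y j) (mapsTo_apply_unitCube_diff_sierpinskiCarpet j hy)
      ((continuous_apply j).mapsTo_closure_connectedComponentIn
        (mapsTo_apply_unitCube_diff_sierpinskiCarpet j) y hxy)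
  · simp [connectedComponentIn_eq_empty hy] at hxy

lemma disjoint_peripheralSphere {m : ℕ} {S : Set (Fin m → ℝ)}
    (hS : ∀ x ∈ S, ∃ j, AvoidsCantorGapClosures (x j)) (y : Fin m → ℝ) :
    Disjoint S (peripheralSphere m y) := by
  refine disjoint_left.2 fun x hx hxy ↦ ?_
  obtain ⟨j, hj⟩ := hS x hx
  exact notMem_closure_connectedComponentIn_of_apply hj y hxy.1

section Triod

variable {n : ℕ} (x₁ : ℝ)

noncomputable def triodDisk (u : EuclideanSpace ℝ (Fin (n + 1))) : Fin (n + 2) → ℝ :=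
  Fin.cons x₁ fun j ↦ 1 / 4 + u j / 4

noncomputable def triodArc (n : ℕ) (t : ℝ) : Fin (n + 2) → ℝ :=
  Fin.cons (x₁ + t * (1 / 2 - x₁)) fun _ ↦ 1 / 4

lemma continuous_triodDisk : Continuous (triodDisk (n := n) x₁) :=
  continuous_const.finCons (by fun_prop)

lemma triodDisk_injective : Function.Injective (triodDisk (n := n) x₁) := by
  intro u v huv
  ext j
  have := congr_fun (Fin.cons_inj.1 huv).2 j
  linarith

lemma continuous_triodArc : Continuous (triodArc x₁ n) :=
  (by fun_prop : Continuous fun t : ℝ ↦ x₁ + t * (1 / 2 - x₁)).finCons continuous_const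

lemma triodArc_injective (hx₁ : x₁ ≠ 1 / 2) : Function.Injective (triodArc x₁ n) := by
  intro s t hst
  have h := (Fin.cons_inj.1 hst).1
  have : 1 / 2 - x₁ ≠ 0 := sub_ne_zero.2 hx₁.symm
  exact mul_right_cancel₀ this (by linarith)

lemma triodDisk_zero : triodDisk x₁ (0 : EuclideanSpace ℝ (Fin (n + 1))) = triodArc x₁ n 0 := by
  simp [triodDisk, triodArc]

lemma eq_zero_of_triodDisk_eq_triodArc (hx₁ : x₁ ≠ 1 / 2) {u : EuclideanSpace ℝ (Fin (n + 1))}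
    {t : ℝ} (h : triodDisk x₁ u = triodArc x₁ n t) : t = 0 := by
  have h0 := (Fin.cons_inj.1 h).1
  exact (mul_eq_zero.1 (by linarith : t * (1 / 2 - x₁) = 0)).resolve_right
    (sub_ne_zero.2 hx₁.symm)

lemma triodDisk_mem_sierpinskiCarpet (hx₁ : x₁ ∈ cantorSet) {u : EuclideanSpace ℝ (Fin (n + 1))}
    (hu : ‖u‖ ≤ 1) : triodDisk x₁ u ∈ sierpinskiCarpet (n + 2) := by
  refine ⟨fun i ↦ Fin.cases (cantorSet_subset_unitInterval hx₁) (fun j ↦ ?_) i, 0, hx₁⟩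
  have := abs_le.1 ((PiLp.norm_apply_le u j).trans hu)
  simp only [triodDisk, Fin.cons_succ, mem_Icc]
  constructor <;> linarith

lemma triodArc_mem_sierpinskiCarpet (hx₁ : x₁ ∈ Icc 0 1) {t : ℝ} (ht : t ∈ Icc 0 1) :
    triodArc x₁ n t ∈ sierpinskiCarpet (n + 2) := by
  refine ⟨fun i ↦ Fin.cases ?_ (fun j ↦ ?_) i, 1, quarter_mem_cantorSet⟩
  · simp only [triodArc, Fin.cons_zero, mem_Icc]
    constructor <;> nlinarith [hx₁.1, hx₁.2, ht.1, ht.2]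
  · simp only [triodArc, Fin.cons_succ, mem_Icc]
    norm_num

end Triod

lemma slice_subset_sierpinskiCarpet {m : ℕ} {x₁ : ℝ} (hx₁ : x₁ ∈ cantorSet) :
    {x : Fin (m + 1) → ℝ | x 0 = x₁ ∧ ∀ i ≠ 0, x i ∈ Ioo (0 : ℝ) 1} ⊆ sierpinskiCarpet (m + 1) := by
  rintro x ⟨hx0, hx⟩
  refine ⟨fun i ↦ ?_, 0, hx0 ▸ hx₁⟩
  by_cases hi : i = 0
  · exact hi ▸ hx0 ▸ cantorSet_subset_unitInterval hx₁
  · exact Ioo_subset_Icc_self (hx i hi)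

/-- There is an embedded `(n-1)`-triod in the Sierpinski space `M^n_{n-1}` (here with
`n + 2` in place of `n`, so `n ≥ 2`) disjoint from every peripheral sphere.
Concretely: (a) if `x₁ ∈ 𝒞` is not in the closure of any complementary interval of the
Cantor set, then the slice `{x₁} × int(I^{n-1})` lies in `M^n_{n-1}` and misses all
peripheral spheres; and (b) there is a closed `(n-1)`-disk together with an arc attached
at an interior point of the disk (meeting the disk exactly in that endpoint), contained
in `M^n_{n-1}` and disjoint from all peripheral spheres. -/
theorem stmt17 (n : ℕ) (x₁ : ℝ) (hx₁ : x₁ ∈ cantorSet)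
    (hx₁' : ∀ y ∈ Set.Icc (0 : ℝ) 1 \ cantorSet,
      x₁ ∉ closure (connectedComponentIn (Set.Icc (0 : ℝ) 1 \ cantorSet) y)) :
    ({x : Fin (n + 2) → ℝ | x 0 = x₁ ∧ ∀ i ≠ 0, x i ∈ Set.Ioo (0 : ℝ) 1} ⊆
        sierpinskiCarpet (n + 2) ∧
      ∀ y ∈ unitCube (n + 2) \ sierpinskiCarpet (n + 2),
        Disjoint {x : Fin (n + 2) → ℝ | x 0 = x₁ ∧ ∀ i ≠ 0, x i ∈ Set.Ioo (0 : ℝ) 1}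
          (peripheralSphere (n + 2) y)) ∧
    ∃ D A : Set (Fin (n + 2) → ℝ),
      D ∪ A ⊆ sierpinskiCarpet (n + 2) ∧
      (∀ y ∈ unitCube (n + 2) \ sierpinskiCarpet (n + 2),
        Disjoint (D ∪ A) (peripheralSphere (n + 2) y)) ∧
      ∃ (φ : ↥(Metric.closedBall (0 : EuclideanSpace ℝ (Fin (n + 1))) 1) ≃ₜ ↥D)
        (ψ : ↥(Set.Icc (0 : ℝ) 1) ≃ₜ ↥A),
        D ∩ A = {(ψ ⟨0, by norm_num⟩ : Fin (n + 2) → ℝ)} ∧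
        ∃ (c : EuclideanSpace ℝ (Fin (n + 1))) (hc : c ∈
            Metric.closedBall (0 : EuclideanSpace ℝ (Fin (n + 1))) 1), ‖c‖ < 1 ∧
          (φ ⟨c, hc⟩ : Fin (n + 2) → ℝ) = (ψ ⟨0, by norm_num⟩ : Fin (n + 2) → ℝ) := by
  have hx₁half : x₁ ≠ 1 / 2 := fun h ↦ half_notMem_cantorSet (h ▸ hx₁)
  have hdisk : IsEmbedding fun u : Metric.closedBall (0 : EuclideanSpace ℝ (Fin (n + 1))) 1 ↦
      triodDisk x₁ u.1 :=
    ((continuous_triodDisk x₁).comp continuous_subtype_val).isClosedEmbedding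
      ((triodDisk_injective x₁).comp Subtype.val_injective) |>.isEmbedding
  have harc : IsEmbedding fun t : Icc (0 : ℝ) 1 ↦ triodArc x₁ n t.1 :=
    ((continuous_triodArc x₁).comp continuous_subtype_val).isClosedEmbedding
      ((triodArc_injective x₁ hx₁half).comp Subtype.val_injective) |>.isEmbedding
  refine ⟨⟨slice_subset_sierpinskiCarpet hx₁,
      fun y _ ↦ disjoint_peripheralSphere (fun x hx ↦ ⟨0, hx.1 ▸ hx₁'⟩) y⟩,
    _, _, ?_, fun y _ ↦ disjoint_peripheralSphere ?_ y, hdisk.toHomeomorph, harc.toHomeomorph,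
    ?_, 0, by simp, by simp, by simp [triodDisk_zero]⟩
  · rintro _ (⟨u, rfl⟩ | ⟨t, rfl⟩)
    · exact triodDisk_mem_sierpinskiCarpet x₁ hx₁ (mem_closedBall_zero_iff.1 u.2)
    · exact triodArc_mem_sierpinskiCarpet x₁ (cantorSet_subset_unitInterval hx₁) t.2
  · rintro _ (⟨u, rfl⟩ | ⟨t, rfl⟩)
    exacts [⟨0, hx₁'⟩, ⟨1, avoidsCantorGapClosures_quarter⟩]
  · refine Subset.antisymm ?_ ?_
    · rintro _ ⟨⟨u, rfl⟩, t, ht⟩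
      have : t.1 = 0 := eq_zero_of_triodDisk_eq_triodArc x₁ hx₁half ht.symm
      simp [← ht, this]
    · rintro _ rfl
      exact ⟨⟨⟨0, by simp⟩, triodDisk_zero x₁⟩, ⟨0, by norm_num⟩, rfl⟩
end
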